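/- arXiv:2103.06163 — 8 statements merged into one kernel-verified Lean document; each statement's English description precedes it below -/
import Mathlib

section
/- Let p be a prime and f, g ∈ ℤ_p[x] be monic polynomials of degree at least 1. Then the ideal of ℤ_p[x] generated by f and g equals ℤ_p[x] if and only if the ideal of (ℤ/pℤ)[x] generated by the reductions of f and g modulo p equals (ℤ/pℤ)[x]. -/
open Polynomial

theorem lifting_lemma (p : ℕ) [Fact p.Prime] (f g : Polynomial ℤ_[p])
    (hf : f.Monic) (hg : g.Monic) (hdf : 1 ≤ f.natDegree) (hdg : 1 ≤ g.natDegree) :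
    Ideal.span {f, g} = (⊤ : Ideal (Polynomial ℤ_[p])) ↔
      Ideal.span {f.map (PadicInt.toZMod (p := p)), g.map (PadicInt.toZMod (p := p))} =
        (⊤ : Ideal (Polynomial (ZMod p))) := by
  constructor
  · intro h
    have := congrArg (Ideal.map (Polynomial.mapRingHom (PadicInt.toZMod (p := p)))) h
    rwa [Ideal.map_span, Ideal.map_top, Set.image_insert_eq, Set.image_singleton] at this
  · intro h
    -- get a Bezout identity mod p
    have h1 : (1 : Polynomial (ZMod p)) ∈ Ideal.span
        {f.map (PadicInt.toZMod (p := p)), g.map (PadicInt.toZMod (p := p))} := by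
      rw [h]; trivial
    rw [Ideal.mem_span_pair] at h1
    obtain ⟨a, b, hab⟩ := h1
    have hsurj : Function.Surjective (PadicInt.toZMod (p := p)) := fun x =>
      ⟨(x.val : ℤ_[p]), by rw [map_natCast]; exact ZMod.natCast_rightInverse x⟩
    obtain ⟨A, hA⟩ := Polynomial.map_surjective _ hsurj a
    obtain ⟨B, hB⟩ := Polynomial.map_surjective _ hsurj b
    set r : Polynomial ℤ_[p] := 1 - (A * f + B * g) with hr
    have hrmap : r.map (PadicInt.toZMod (p := p)) = 0 := by
      simp [hr, Polynomial.map_sub, Polynomial.map_add, Polynomial.map_mul, hA, hB, hab]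
    have hdvd : Polynomial.C ((p : ℤ_[p])) ∣ r := by
      rw [Polynomial.C_dvd_iff_dvd_coeff]
      intro i
      have : (PadicInt.toZMod (p := p)) (r.coeff i) = 0 := by
        have := congrArg (fun q => Polynomial.coeff q i) hrmap
        simpa using this
      have hker : r.coeff i ∈ RingHom.ker (PadicInt.toZMod (p := p)) := this
      rw [PadicInt.ker_toZMod, PadicInt.maximalIdeal_eq_span_p,
        Ideal.mem_span_singleton] at hker
      exact hker
    obtain ⟨hq, hhq⟩ := hdvd
    -- pass to AdjoinRoot f
    have hCp : (Polynomial.C ((p : ℤ_[p])) : Polynomial ℤ_[p]) = (p : Polynomial ℤ_[p]) := by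
      simp
    have key : (1 : Polynomial ℤ_[p]) = A * f + B * g + (p : Polynomial ℤ_[p]) * hq := by
      rw [← hCp]
      have : r = Polynomial.C ((p : ℤ_[p])) * hq := hhq
      rw [hr] at this
      linear_combination this
    letI : Fact f.Monic := ⟨hf⟩
    have hint : Algebra.IsIntegral ℤ_[p] (AdjoinRoot f) := by
      have : Module.Finite ℤ_[p] (AdjoinRoot f) :=
        Module.Finite.of_basis (AdjoinRoot.powerBasis' hf).basis
      exact Algebra.IsIntegral.of_finite _ _
    set J : Ideal (AdjoinRoot f) := Ideal.span {AdjoinRoot.mk f g} with hJ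
    have hJtop : J = ⊤ := by
      by_contra hne
      obtain ⟨m, hm, hJm⟩ := Ideal.exists_le_maximal J hne
      have hpm : (p : AdjoinRoot f) ∈ m := by
        have hcm : (Ideal.comap (algebraMap ℤ_[p] (AdjoinRoot f)) m).IsMaximal :=
          Ideal.isMaximal_comap_of_isIntegral_of_isMaximal m
        have : Ideal.comap (algebraMap ℤ_[p] (AdjoinRoot f)) m = IsLocalRing.maximalIdeal ℤ_[p] :=
          IsLocalRing.eq_maximalIdeal hcm
        have hp : (p : ℤ_[p]) ∈ Ideal.comap (algebraMap ℤ_[p] (AdjoinRoot f)) m := by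
          rw [this, PadicInt.maximalIdeal_eq_span_p]
          exact Ideal.subset_span rfl
        have := Ideal.mem_comap.mp hp
        rwa [map_natCast] at this
      have hone : (1 : AdjoinRoot f) ∈ m := by
        have := congrArg (AdjoinRoot.mk f) key
        rw [map_one, map_add, map_add, map_mul, map_mul, map_mul, AdjoinRoot.mk_self,
          mul_zero, zero_add, map_natCast] at this
        rw [this]
        exact m.add_mem (m.mul_mem_left _ (hJm (Ideal.subset_span rfl)))
          (m.mul_mem_right _ hpm)
      exact hm.ne_top (Ideal.eq_top_of_isUnit_mem m hone isUnit_one)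
    have h1J : (1 : AdjoinRoot f) ∈ J := by rw [hJtop]; trivial
    rw [hJ, Ideal.mem_span_singleton'] at h1J
    obtain ⟨c, hc⟩ := h1J
    obtain ⟨C', hC'⟩ := AdjoinRoot.mk_surjective c
    have : AdjoinRoot.mk f (C' * g - 1) = 0 := by
      rw [map_sub, map_mul, map_one, hC', hc, sub_self]
    rw [AdjoinRoot.mk_eq_zero] at this
    obtain ⟨d, hd⟩ := this
    rw [Ideal.eq_top_iff_one, Ideal.mem_span_pair]
    exact ⟨-d, C', by linear_combination hd⟩
end

section
/- Let p be a prime, k ≥ 1 an integer, and f, g ∈ ℤ_p[x] monic polynomials of degree at least 1. Then (f, g) = ℤ_p[x] if and only if the reductions of f and g modulo p^k generate (ℤ/p^kℤ)[x] as an ideal. -/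
/-!
Reduction modulo `p ^ k` is surjective on coefficients with kernel `(p ^ k)`, so the reduced
polynomials generate the unit ideal exactly when `(f, g) + p ^ k ℤ_[p][X] = ℤ_[p][X]`. As `f` is
monic, `ℤ_[p][X] ⧸ (f, g)` is a finitely generated `ℤ_[p]`-module `M` with `M = p ^ k M`, so
Nakayama's lemma over the local ring `ℤ_[p]` gives `M = 0`.
-/

open Polynomial

theorem Ideal.eq_top_of_sup_map_algebraMap_eq_top {R A : Type*} [CommRing R] [IsLocalRing R]
    [CommRing A] [Algebra R A] {I : Ideal A} [Module.Finite R (A ⧸ I)] {J : Ideal R}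
    (hJ : J ≠ ⊤) (h : I ⊔ J.map (algebraMap R A) = ⊤) : I = ⊤ := by
  by_contra hI
  have : Nontrivial (A ⧸ I) := Ideal.Quotient.nontrivial_iff.mpr hI
  have hmap : J.map (algebraMap R (A ⧸ I)) = ⊤ := by
    have := congrArg (Ideal.map (Ideal.Quotient.mk I)) h
    rwa [Ideal.map_sup, Ideal.map_quotient_self, bot_sup_eq, Ideal.map_map, Ideal.map_top] at this
  refine Submodule.top_ne_ideal_smul_of_le_jacobson_annihilator (M := A ⧸ I) (I := J) ?_ ?_
  · exact (IsLocalRing.le_maximalIdeal hJ).trans (IsLocalRing.maximalIdeal_le_jacobson _)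
  · rw [Ideal.smul_top_eq_map, hmap, Submodule.restrictScalars_top]

theorem Polynomial.Monic.finite_quotient_of_mem {R : Type*} [CommRing R] {f : R[X]}
    (hf : f.Monic) {I : Ideal R[X]} (hfI : f ∈ I) : Module.Finite R (R[X] ⧸ I) :=
  have := hf.finite_quotient
  have hle := (Ideal.span_singleton_le_iff_mem I).mpr hfI
  Module.Finite.of_surjective (Ideal.Quotient.factorₐ R hle).toLinearMap
    (Ideal.Quotient.factor_surjective hle)

theorem Polynomial.map_mapRingHom_eq_top_iff {R S : Type*} [CommRing R] [IsLocalRing R]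
    [CommRing S] [Nontrivial S] {φ : R →+* S} (hφ : Function.Surjective φ) {I : Ideal R[X]}
    {f : R[X]} (hf : f.Monic) (hfI : f ∈ I) : I.map (mapRingHom φ) = ⊤ ↔ I = ⊤ := by
  refine ⟨fun h => ?_, fun h => h ▸ Ideal.map_top _⟩
  have := hf.finite_quotient_of_mem hfI
  refine Ideal.eq_top_of_sup_map_algebraMap_eq_top (RingHom.ker_ne_top φ) ?_
  rw [algebraMap_eq, ← ker_mapRingHom,
    ← Ideal.comap_map_of_surjective' _ (map_surjective φ hφ), h, Ideal.comap_top]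

theorem lifting_lemma_pow_general (p : ℕ) [Fact p.Prime] (k : ℕ) (hk : 1 ≤ k)
    (f g : Polynomial ℤ_[p])
    (hf : f.Monic) :
    Ideal.span {f, g} = (⊤ : Ideal (Polynomial ℤ_[p])) ↔
      Ideal.span {f.map (PadicInt.toZModPow (p := p) k), g.map (PadicInt.toZModPow (p := p) k)} =
        (⊤ : Ideal (Polynomial (ZMod (p ^ k)))) := by
  have : Nontrivial (ZMod (p ^ k)) :=
    ZMod.nontrivial_iff.mpr (Nat.one_lt_pow (by omega) (Fact.out : p.Prime).one_lt).ne'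
  rw [← map_mapRingHom_eq_top_iff (ZMod.ringHom_surjective (PadicInt.toZModPow k)) hf
    (Ideal.subset_span (Set.mem_insert f {g})), Ideal.map_span, Set.image_pair]
  rfl

theorem lifting_lemma_pow (p : ℕ) [Fact p.Prime] (k : ℕ) (hk : 1 ≤ k)
    (f g : Polynomial ℤ_[p])
    (hf : f.Monic) (hg : g.Monic) (hdf : 1 ≤ f.natDegree) (hdg : 1 ≤ g.natDegree) :
    Ideal.span {f, g} = (⊤ : Ideal (Polynomial ℤ_[p])) ↔
      Ideal.span {f.map (PadicInt.toZModPow (p := p) k), g.map (PadicInt.toZModPow (p := p) k)} =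
        (⊤ : Ideal (Polynomial (ZMod (p ^ k)))) :=
  lifting_lemma_pow_general p k hk f g hf
end

section
/- Let p be a prime and f ∈ ℤ_p[x] a monic polynomial of degree at least 1. Then (f, f') = ℤ_p[x] if and only if the reduction of f modulo p is separable in (ℤ/pℤ)[x], i.e., its reduction and the derivative of its reduction generate (ℤ/pℤ)[x]. -/
open Polynomial

theorem separable_iff_reduction_separable (p : ℕ) [Fact p.Prime]
    (f : Polynomial ℤ_[p]) (hf : f.Monic) (hdf : 1 ≤ f.natDegree) :
    Ideal.span {f, derivative f} = (⊤ : Ideal (Polynomial ℤ_[p])) ↔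
      Ideal.span {f.map (PadicInt.toZMod (p := p)),
          derivative (f.map (PadicInt.toZMod (p := p)))} =
        (⊤ : Ideal (Polynomial (ZMod p))) := by
  have hsurj : Function.Surjective (PadicInt.toZMod (p := p)) := fun c =>
    ⟨((c.val : ℕ) : ℤ_[p]), by rw [map_natCast]; simp [ZMod.natCast_val, ZMod.cast_id]⟩
  constructor
  · intro h
    have h2 : Ideal.map (Polynomial.mapRingHom (PadicInt.toZMod (p := p)))
        (Ideal.span {f, derivative f}) = ⊤ := by
      rw [h, Ideal.map_top]
    rwa [Ideal.map_span, Set.image_pair, coe_mapRingHom, ← derivative_map] at h2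
  · intro h
    obtain ⟨a, b, hab⟩ := Ideal.mem_span_pair.mp ((Ideal.eq_top_iff_one _).mp h)
    obtain ⟨A, hA⟩ := Polynomial.map_surjective _ hsurj a
    obtain ⟨B, hB⟩ := Polynomial.map_surjective _ hsurj b
    have key : ∀ i, ((p : ℤ_[p]) ∣ (1 - (A * f + B * derivative f)).coeff i) := by
      intro i
      have hmap : (1 - (A * f + B * derivative f)).map (PadicInt.toZMod (p := p)) = 0 := by
        rw [Polynomial.map_sub, Polynomial.map_one, Polynomial.map_add, Polynomial.map_mul,
          Polynomial.map_mul, hA, hB, ← derivative_map, hab, sub_self]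
      have : PadicInt.toZMod ((1 - (A * f + B * derivative f)).coeff i) = 0 := by
        rw [← Polynomial.coeff_map, hmap, Polynomial.coeff_zero]
      have hk : (1 - (A * f + B * derivative f)).coeff i ∈ IsLocalRing.maximalIdeal ℤ_[p] := by
        rw [← PadicInt.ker_toZMod]; exact this
      rw [PadicInt.maximalIdeal_eq_span_p, Ideal.mem_span_singleton] at hk
      exact hk
    obtain ⟨g, hg⟩ := (Polynomial.C_dvd_iff_dvd_coeff _ _).mpr key
    have heq : A * f + B * derivative f + C (p : ℤ_[p]) * g = 1 := by
      rw [← hg]; ring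
    -- work in AdjoinRoot f
    haveI : Module.Finite ℤ_[p] (AdjoinRoot f) :=
      Module.Finite.of_basis (AdjoinRoot.powerBasis' hf).basis
    set φ := AdjoinRoot.mk f with hφ
    have h1 : φ B * φ (derivative f) + (p : ℤ_[p]) • φ g = 1 := by
      have := congrArg φ heq
      rw [map_add, map_add, map_mul, map_mul, map_mul, map_one, AdjoinRoot.mk_self,
        mul_zero, zero_add] at this
      rw [Algebra.smul_def, AdjoinRoot.algebraMap_eq]
      exact this
    set N : Submodule ℤ_[p] (AdjoinRoot f) :=
      (Ideal.span {φ (derivative f)}).restrictScalars ℤ_[p] with hNdef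
    have hjac : Ideal.span {(p : ℤ_[p])} ≤ Ideal.jacobson ⊥ := by
      rw [IsLocalRing.jacobson_eq_maximalIdeal ⊥ bot_ne_top,
        PadicInt.maximalIdeal_eq_span_p]
    have htop : (⊤ : Submodule ℤ_[p] (AdjoinRoot f)) ≤
        N ⊔ (Ideal.span {(p : ℤ_[p])}) • ⊤ := by
      intro x _
      have hx : x = x * φ B * φ (derivative f) + (p : ℤ_[p]) • (x * φ g) := by
        calc x = x * (φ B * φ (derivative f) + (p : ℤ_[p]) • φ g) := by rw [h1, mul_one]
        _ = x * φ B * φ (derivative f) + (p : ℤ_[p]) • (x * φ g) := by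
            rw [mul_add, mul_smul_comm, mul_assoc]
      rw [hx]
      refine Submodule.add_mem_sup ?_ ?_
      · exact Ideal.mul_mem_left _ _ (Ideal.mem_span_singleton_self _)
      · exact Submodule.smul_mem_smul (Ideal.mem_span_singleton_self _) trivial
    have hFG : (⊤ : Submodule ℤ_[p] (AdjoinRoot f)).FG := Module.finite_def.mp ‹_›
    have hN : (⊤ : Submodule ℤ_[p] (AdjoinRoot f)) ≤ N :=
      Submodule.le_of_le_smul_of_le_jacobson_bot hFG hjac htop
    have h1N : (1 : AdjoinRoot f) ∈ Ideal.span {φ (derivative f)} := hN trivial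
    obtain ⟨c, hc⟩ := Ideal.mem_span_singleton'.mp h1N
    obtain ⟨Cq, hCq⟩ := AdjoinRoot.mk_surjective c
    have hz : φ (1 - Cq * derivative f) = 0 := by
      rw [map_sub, map_one, map_mul, hCq, hc, sub_self]
    obtain ⟨d, hd⟩ := AdjoinRoot.mk_eq_zero.mp hz
    rw [Ideal.eq_top_iff_one, Ideal.mem_span_pair]
    exact ⟨d, Cq, by linear_combination -hd⟩
end

section
/- Let p be a prime and d ≥ 2 an integer. With respect to the product Haar probability measure on the coefficient space ℤ_p^d of monic polynomials of degree d over ℤ_p, the set of separable monic polynomials of degree d has measure 1 − 1/p. -/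
open Polynomial MeasureTheory

noncomputable section

instance padicMeasurableSpace (p : ℕ) [Fact p.Prime] : MeasurableSpace ℤ_[p] := borel _

instance padicBorelSpace (p : ℕ) [Fact p.Prime] : BorelSpace ℤ_[p] := ⟨rfl⟩

/-- The Haar probability measure on `ℤ_[p]`, normalized so that `ℤ_[p]` has measure 1. -/
def padicHaar (p : ℕ) [Fact p.Prime] : Measure ℤ_[p] :=
  Measure.addHaarMeasure ⟨⟨Set.univ, isCompact_univ⟩, by simp⟩

/-- The monic polynomial of degree `d` with non-leading coefficients given by `a`. -/
def monicOf {R : Type*} [CommRing R] (d : ℕ) (a : Fin d → R) : R[X] :=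
  X ^ d + ∑ i : Fin d, C (a i) * X ^ (i : ℕ)


/-!
Separability of a monic `f ∈ ℤ_[p][X]` depends only on `f mod p`: the ring `ℤ_[p][X] ⧸ (f, f')`
is a finite `ℤ_[p]`-module, so by Nakayama it vanishes as soon as it vanishes mod `p`. Over the
perfect field `𝔽_p`, separable means squarefree. Every residue class mod `p` has Haar measure
`1/p`, so the measure is `p^(-d)` times the number `s(d)` of squarefree monic polynomials of
degree `d` over `𝔽_p`. Writing each monic polynomial uniquely as `g * h ^ 2` with `g` squarefree
gives `q^n = ∑ₖ s(n - 2k) q^k`; subtracting `q` times the identity for `n - 2` leaves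
`s(n) = q^n - q^(n-1)` for `n ≥ 2`.
-/

section MonicOf

variable {R : Type*} [CommRing R] {d : ℕ}

theorem coeff_monicOf (a : Fin d → R) (i : Fin d) : (monicOf d a).coeff i = a i := by
  simp [monicOf, coeff_X_pow, i.isLt.ne, Fin.val_inj]

theorem monicOf_injective : Function.Injective (monicOf (R := R) d) :=
  fun a b h ↦ funext fun i ↦ by rw [← coeff_monicOf a, ← coeff_monicOf b, h]

theorem map_monicOf {S : Type*} [CommRing S] (φ : R →+* S) (a : Fin d → R) :
    (monicOf d a).map φ = monicOf d (φ ∘ a) := by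
  simp [monicOf, Polynomial.map_sum]

theorem monic_monicOf (a : Fin d → R) : (monicOf d a).Monic :=
  monic_X_pow_add (degree_sum_fin_lt a)

theorem natDegree_monicOf [Nontrivial R] (a : Fin d → R) : (monicOf d a).natDegree = d := by
  rw [monicOf, natDegree_add_eq_left_of_degree_lt, natDegree_X_pow]
  simpa using degree_sum_fin_lt a

theorem exists_monicOf_eq {f : R[X]} (hf : f.Monic) (hd : f.natDegree = d) :
    ∃ a : Fin d → R, monicOf d a = f := by
  subst hd
  refine ⟨fun i ↦ f.coeff i, ?_⟩
  rw [monicOf, Fin.sum_univ_eq_sum_range (fun i ↦ C (f.coeff i) * X ^ i), ← hf.as_sum]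

end MonicOf

theorem Polynomial.eq_top_of_map_eq_top_of_monic_mem {R S : Type*} [CommRing R] [CommRing S]
    {φ : R →+* S} (hφ : Function.Surjective φ) (hker : RingHom.ker φ ≤ Ideal.jacobson ⊥)
    {I : Ideal R[X]} {f : R[X]} (hf : f.Monic) (hfI : f ∈ I)
    (hI : I.map (mapRingHom φ) = ⊤) : I = ⊤ := by
  have hle : Ideal.span {f} ≤ I := (Ideal.span_singleton_le_iff_mem I).2 hfI
  have : Module.Finite R (R[X] ⧸ I) :=
    have := hf.finite_quotient
    .of_surjective (Ideal.Quotient.factorₐ R hle).toLinearMap (Ideal.Quotient.factor_surjective hle)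
  have hsup : I ⊔ (RingHom.ker φ).map C = ⊤ := by
    rw [← ker_mapRingHom, ← Ideal.comap_map_of_surjective' _ (map_surjective φ hφ), hI,
      Ideal.comap_top]
  have hmap : (RingHom.ker φ).map (algebraMap R (R[X] ⧸ I)) = ⊤ := by
    rw [← Ideal.map_top (Ideal.Quotient.mk I), ← hsup, Ideal.map_sup, Ideal.map_quotient_self,
      bot_sup_eq, Ideal.map_map]
    rfl
  have htop : (⊤ : Submodule R (R[X] ⧸ I)) = ⊥ :=
    Submodule.eq_bot_of_le_smul_of_le_jacobson_bot _ _ Module.Finite.fg_top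
      (by rw [Ideal.smul_top_eq_map, hmap]; rfl) hker
  rw [← Ideal.Quotient.subsingleton_iff, ← Submodule.subsingleton_iff R]
  exact subsingleton_of_bot_eq_top htop.symm

theorem Polynomial.Monic.isCoprime_map_iff {R S : Type*} [CommRing R] [CommRing S]
    {φ : R →+* S} (hφ : Function.Surjective φ) (hker : RingHom.ker φ ≤ Ideal.jacobson ⊥)
    {f g : R[X]} (hf : f.Monic) : IsCoprime (f.map φ) (g.map φ) ↔ IsCoprime f g := by
  refine ⟨fun h ↦ ?_, fun h ↦ h.map (mapRingHom φ)⟩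
  rw [← Ideal.sup_eq_top_iff_isCoprime] at h ⊢
  refine eq_top_of_map_eq_top_of_monic_mem hφ hker hf
    (Ideal.mem_sup_left (Ideal.mem_span_singleton_self f)) ?_
  simpa [Ideal.map_sup, Ideal.map_span] using h

namespace UniqueFactorizationMonoid

variable {R : Type*} [CommMonoidWithZero R] [UniqueFactorizationMonoid R]

theorem exists_squarefree_mul_sq (x : R) : ∃ g h : R, Squarefree g ∧ x = g * h ^ 2 := by
  induction x using WfDvdMonoid.induction_on_irreducible with
  | zero => exact ⟨1, 0, squarefree_one, by simp⟩
  | unit u hu => exact ⟨u, 1, hu.squarefree, by simp⟩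
  | mul a p _ hp ih =>
    obtain ⟨g, h, hg, rfl⟩ := ih
    by_cases hpg : p ∣ g
    · obtain ⟨g', rfl⟩ := hpg
      exact ⟨g', p * h, hg.squarefree_of_dvd (dvd_mul_left g' p), by rw [mul_pow, sq p]; ac_rfl⟩
    · refine ⟨p * g, h, ?_, (mul_assoc p g _).symm⟩
      exact squarefree_mul_iff.2 ⟨hp.isRelPrime_iff_not_dvd.2 hpg, hp.squarefree, hg⟩

theorem associated_of_squarefree_mul_sq_eq [NormalizationMonoid R] {g₁ g₂ h₁ h₂ : R}
    (hg₁ : Squarefree g₁) (hg₂ : Squarefree g₂) (hh₁ : h₁ ≠ 0) (hh₂ : h₂ ≠ 0)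
    (heq : g₁ * h₁ ^ 2 = g₂ * h₂ ^ 2) : Associated g₁ g₂ ∧ Associated h₁ h₂ := by
  classical
  have : Nontrivial R := nontrivial_of_ne h₁ 0 hh₁
  have hg₁0 := hg₁.ne_zero
  have hg₂0 := hg₂.ne_zero
  have hnodup₁ := Multiset.nodup_iff_count_le_one.1 <|
    (squarefree_iff_nodup_normalizedFactors hg₁0).1 hg₁
  have hnodup₂ := Multiset.nodup_iff_count_le_one.1 <|
    (squarefree_iff_nodup_normalizedFactors hg₂0).1 hg₂
  have hfactors := congrArg normalizedFactors heq
  rw [normalizedFactors_mul hg₁0 (pow_ne_zero 2 hh₁),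
    normalizedFactors_mul hg₂0 (pow_ne_zero 2 hh₂), normalizedFactors_pow,
    normalizedFactors_pow] at hfactors
  -- the multiplicity of each prime in `g * h ^ 2` determines its multiplicities in `g` and `h`
  have hcount (a : R) : (normalizedFactors g₁).count a = (normalizedFactors g₂).count a ∧
      (normalizedFactors h₁).count a = (normalizedFactors h₂).count a := by
    have := congrArg (Multiset.count a) hfactors
    simp only [Multiset.count_add, Multiset.count_nsmul] at this
    have := hnodup₁ a
    have := hnodup₂ a
    omega
  rw [associated_iff_normalizedFactors_eq_normalizedFactors hg₁0 hg₂0,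
    associated_iff_normalizedFactors_eq_normalizedFactors hh₁ hh₂]
  exact ⟨Multiset.ext.2 fun a ↦ (hcount a).1, Multiset.ext.2 fun a ↦ (hcount a).2⟩

end UniqueFactorizationMonoid

namespace Polynomial

variable {F : Type*} [Field F]

theorem Monic.exists_squarefree_mul_sq {f : F[X]} (hf : f.Monic) :
    ∃ g h : F[X], g.Monic ∧ h.Monic ∧ Squarefree g ∧ f = g * h ^ 2 := by
  classical
  obtain ⟨g, h, hg, rfl⟩ := UniqueFactorizationMonoid.exists_squarefree_mul_sq f
  have hh : h ≠ 0 := by rintro rfl; simp at hf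
  refine ⟨normalize g, normalize h, monic_normalize hg.ne_zero, monic_normalize hh,
    (normalize_associated g).squarefree_iff.2 hg, ?_⟩
  rw [← hf.normalize_eq_self, normalize_mul, sq, sq, normalize_mul]

theorem eq_of_squarefree_mul_sq_eq {g₁ g₂ h₁ h₂ : F[X]} (hg₁ : g₁.Monic) (hg₂ : g₂.Monic)
    (hh₁ : h₁.Monic) (hh₂ : h₂.Monic) (hg₁sq : Squarefree g₁) (hg₂sq : Squarefree g₂)
    (heq : g₁ * h₁ ^ 2 = g₂ * h₂ ^ 2) : g₁ = g₂ ∧ h₁ = h₂ := by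
  classical
  obtain ⟨hg, hh⟩ := UniqueFactorizationMonoid.associated_of_squarefree_mul_sq_eq hg₁sq hg₂sq
    hh₁.ne_zero hh₂.ne_zero heq
  exact ⟨eq_of_monic_of_associated hg₁ hg₂ hg, eq_of_monic_of_associated hh₁ hh₂ hh⟩

end Polynomial

section Counting

open Finset

variable (F : Type*) [Field F] [Fintype F]

open Classical in
def monicsOfDegree (n : ℕ) : Finset F[X] :=
  univ.image (monicOf n)

open Classical in
def squarefreeMonicsOfDegree (n : ℕ) : Finset F[X] :=
  {f ∈ monicsOfDegree F n | Squarefree f}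

variable {F} in
theorem mem_monicsOfDegree {n : ℕ} {f : F[X]} :
    f ∈ monicsOfDegree F n ↔ f.Monic ∧ f.natDegree = n := by
  classical
  simp only [monicsOfDegree, mem_image, mem_univ, true_and]
  constructor
  · rintro ⟨a, rfl⟩
    exact ⟨monic_monicOf a, natDegree_monicOf a⟩
  · rintro ⟨hf, hn⟩
    exact exists_monicOf_eq hf hn

variable {F} in
theorem mem_squarefreeMonicsOfDegree {n : ℕ} {f : F[X]} :
    f ∈ squarefreeMonicsOfDegree F n ↔ (f.Monic ∧ f.natDegree = n) ∧ Squarefree f := by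
  classical
  rw [squarefreeMonicsOfDegree, mem_filter, mem_monicsOfDegree]

theorem card_monicsOfDegree (n : ℕ) : #(monicsOfDegree F n) = Fintype.card F ^ n := by
  classical
  rw [monicsOfDegree, card_image_of_injective _ monicOf_injective, card_univ, Fintype.card_fun,
    Fintype.card_fin]

theorem pow_eq_sum_card_squarefreeMonicsOfDegree (n : ℕ) :
    Fintype.card F ^ n = ∑ k ∈ range (n / 2 + 1),
      #(squarefreeMonicsOfDegree F (n - 2 * k)) * Fintype.card F ^ k := by
  classical
  let S := (range (n / 2 + 1)).sigma
    fun k ↦ squarefreeMonicsOfDegree F (n - 2 * k) ×ˢ monicsOfDegree F k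
  have hS {k g h} : ⟨k, g, h⟩ ∈ S ↔ k < n / 2 + 1 ∧ ((g.Monic ∧ g.natDegree = n - 2 * k) ∧
      Squarefree g) ∧ h.Monic ∧ h.natDegree = k := by
    simp only [S, mem_sigma, mem_range, mem_product, mem_squarefreeMonicsOfDegree,
      mem_monicsOfDegree]
  calc Fintype.card F ^ n = #(monicsOfDegree F n) := (card_monicsOfDegree F n).symm
    _ = #S := by
      refine (card_bij (fun x _ ↦ x.2.1 * x.2.2 ^ 2) ?_ ?_ ?_).symm
      · rintro ⟨k, g, h⟩ hx
        obtain ⟨hk, ⟨⟨hg, hgn⟩, -⟩, hh, hhk⟩ := hS.1 hx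
        refine mem_monicsOfDegree.2 ⟨hg.mul (hh.pow 2), ?_⟩
        rw [hg.natDegree_mul (hh.pow 2), natDegree_pow, hgn, hhk]
        omega
      · rintro ⟨k₁, g₁, h₁⟩ hx₁ ⟨k₂, g₂, h₂⟩ hx₂ heq
        obtain ⟨-, ⟨⟨hg₁, -⟩, hg₁sq⟩, hh₁, rfl⟩ := hS.1 hx₁
        obtain ⟨-, ⟨⟨hg₂, -⟩, hg₂sq⟩, hh₂, rfl⟩ := hS.1 hx₂
        obtain ⟨rfl, rfl⟩ := eq_of_squarefree_mul_sq_eq hg₁ hg₂ hh₁ hh₂ hg₁sq hg₂sq heq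
        rfl
      · intro f hf
        obtain ⟨hf, hfn⟩ := mem_monicsOfDegree.1 hf
        obtain ⟨g, h, hg, hh, hgsq, rfl⟩ := hf.exists_squarefree_mul_sq
        rw [hg.natDegree_mul (hh.pow 2), natDegree_pow] at hfn
        exact ⟨⟨h.natDegree, g, h⟩, hS.2 ⟨by omega, ⟨⟨hg, by omega⟩, hgsq⟩, hh, rfl⟩, rfl⟩
    _ = _ := by
      simp only [S, card_sigma, card_product, card_monicsOfDegree]

theorem card_squarefreeMonicsOfDegree {n : ℕ} (hn : 2 ≤ n) :
    #(squarefreeMonicsOfDegree F n) = Fintype.card F ^ n - Fintype.card F ^ (n - 1) := by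
  obtain ⟨m, rfl⟩ : ∃ m, n = m + 2 := ⟨n - 2, by omega⟩
  have hsum := pow_eq_sum_card_squarefreeMonicsOfDegree F (m + 2)
  rw [sum_range_succ', show (m + 2) / 2 = m / 2 + 1 by omega] at hsum
  -- the terms with `k ≥ 1` add up to `|F|` times the same identity in degree `m`
  have htail : ∑ k ∈ range (m / 2 + 1),
      #(squarefreeMonicsOfDegree F (m + 2 - 2 * (k + 1))) * Fintype.card F ^ (k + 1) =
        Fintype.card F ^ (m + 1) := by
    rw [pow_succ', pow_eq_sum_card_squarefreeMonicsOfDegree F m, mul_sum]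
    refine sum_congr rfl fun k _ ↦ ?_
    rw [show m + 2 - 2 * (k + 1) = m - 2 * k by omega]
    ring
  rw [htail] at hsum
  simp only [mul_zero, Nat.sub_zero, pow_zero, mul_one] at hsum
  rw [show m + 2 - 1 = m + 1 by omega]
  omega

theorem ncard_setOf_squarefree_monicOf {n : ℕ} (hn : 2 ≤ n) :
    {a : Fin n → F | Squarefree (monicOf n a)}.ncard =
      Fintype.card F ^ n - Fintype.card F ^ (n - 1) := by
  have himage : monicOf n '' {a | Squarefree (monicOf n a)} =
      (squarefreeMonicsOfDegree F n : Set F[X]) := by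
    ext f
    simp only [Set.mem_image, Set.mem_ofPred_eq, mem_coe, mem_squarefreeMonicsOfDegree]
    constructor
    · rintro ⟨a, ha, rfl⟩
      exact ⟨⟨monic_monicOf a, natDegree_monicOf a⟩, ha⟩
    · rintro ⟨⟨hf, hfn⟩, hsq⟩
      obtain ⟨a, rfl⟩ := exists_monicOf_eq hf hfn
      exact ⟨a, hsq, rfl⟩
  rw [← Set.ncard_image_of_injective _ monicOf_injective, himage, Set.ncard_coe_finset,
    card_squarefreeMonicsOfDegree F hn]

end Counting

section UniformFibres

open MeasureTheory
open scoped ENNReal Pointwise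

variable {G H : Type*} [AddGroup G] [AddGroup H]

theorem AddMonoidHom.preimage_singleton_eq_vadd_ker (φ : G →+ H) (c : G) :
    φ ⁻¹' {φ c} = c +ᵥ (φ.ker : Set G) := by
  ext x
  simp [Set.mem_vadd_set_iff_neg_vadd_mem, neg_add_eq_zero, eq_comm (a := φ x)]

variable [MeasurableSpace G] [MeasurableAdd G]

theorem measurableSet_preimage_singleton_of_measurableSet_ker {φ : G →+ H}
    (hφ : Function.Surjective φ) (hker : MeasurableSet (φ.ker : Set G)) (t : H) :
    MeasurableSet (φ ⁻¹' {t}) := by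
  obtain ⟨c, rfl⟩ := hφ t
  rw [φ.preimage_singleton_eq_vadd_ker]
  exact hker.const_vadd c

variable [Fintype H]

theorem measure_preimage_singleton_eq_inv_card (μ : Measure G) [IsProbabilityMeasure μ]
    [μ.IsAddLeftInvariant] {φ : G →+ H} (hφ : Function.Surjective φ)
    (hker : MeasurableSet (φ.ker : Set G)) (t : H) :
    μ (φ ⁻¹' {t}) = (Fintype.card H : ℝ≥0∞)⁻¹ := by
  obtain ⟨c, rfl⟩ := hφ t
  rw [φ.preimage_singleton_eq_vadd_ker, measure_vadd]
  have h := AddSubgroup.index_mul_measure φ.ker hker μ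
  rw [AddSubgroup.index_ker, AddMonoidHom.range_eq_top_of_surjective φ hφ, AddSubgroup.card_top,
    Nat.card_eq_fintype_card, measure_univ] at h
  exact ENNReal.eq_inv_of_mul_eq_one_left (by rwa [mul_comm])

theorem measure_pi_preimage_eq {ι : Type*} [Fintype ι] (μ : Measure G) [IsProbabilityMeasure μ]
    [μ.IsAddLeftInvariant] {φ : G →+ H} (hφ : Function.Surjective φ)
    (hker : MeasurableSet (φ.ker : Set G)) (T : Set (ι → H)) :
    Measure.pi (fun _ : ι ↦ μ) ((fun a i ↦ φ (a i)) ⁻¹' T) =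
      T.ncard * ((Fintype.card H : ℝ≥0∞)⁻¹) ^ Fintype.card ι := by
  classical
  have hT := T.toFinite
  have hunion : (fun a i ↦ φ (a i)) ⁻¹' T = ⋃ t ∈ hT.toFinset, Set.univ.pi fun i ↦ φ ⁻¹' {t i} := by
    ext a
    simp [← funext_iff]
  rw [hunion, measure_biUnion_finset, Set.ncard_eq_toFinset_card T hT]
  · simp [Measure.pi_pi, measure_preimage_singleton_eq_inv_card μ hφ hker]
  · intro t _ t' _ htt'
    refine Set.disjoint_left.2 fun a ha ha' ↦ htt' (funext fun i ↦ ?_)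
    exact (ha i trivial).symm.trans (ha' i trivial)
  · exact fun t _ ↦ .univ_pi fun i ↦ measurableSet_preimage_singleton_of_measurableSet_ker hφ hker _

end UniformFibres

open scoped ENNReal in
theorem ENNReal.natCast_pow_sub_pow_pred_mul_inv_pow {q n : ℕ} (hq : q ≠ 0) (hn : n ≠ 0) :
    ((q ^ n - q ^ (n - 1) : ℕ) : ℝ≥0∞) * ((q : ℝ≥0∞)⁻¹) ^ n = 1 - (q : ℝ≥0∞)⁻¹ := by
  obtain ⟨m, rfl⟩ : ∃ m, n = m + 1 := ⟨n - 1, by omega⟩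
  have hq' : (q : ℝ≥0∞) ≠ 0 := by exact_mod_cast hq
  have hqq : (q : ℝ≥0∞) * (q : ℝ≥0∞)⁻¹ = 1 := ENNReal.mul_inv_cancel hq' (ENNReal.natCast_ne_top q)
  rw [Nat.add_sub_cancel, pow_succ, ← Nat.mul_sub_one, Nat.cast_mul, Nat.cast_pow,
    ENNReal.natCast_sub, Nat.cast_one, pow_succ, mul_mul_mul_comm, ← mul_pow, hqq, one_pow,
    one_mul, ENNReal.sub_mul (fun _ _ ↦ ENNReal.inv_ne_top.2 hq'), one_mul, hqq]

namespace PadicInt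

variable {p : ℕ} [Fact p.Prime]

instance : IsProbabilityMeasure (padicHaar p) :=
  ⟨Measure.addHaarMeasure_self⟩

instance : (padicHaar p).IsAddLeftInvariant := by
  unfold padicHaar
  infer_instance

theorem measurableSet_ker_toZMod :
    MeasurableSet ((toZMod : ℤ_[p] →+* ZMod p).toAddMonoidHom.ker : Set ℤ_[p]) := by
  change MeasurableSet (RingHom.ker (toZMod : ℤ_[p] →+* ZMod p) : Set ℤ_[p])
  rw [ker_toZMod]
  exact (IsLocalRing.isOpen_maximalIdeal ℤ_[p]).measurableSet

theorem span_monic_derivative_eq_top_iff {f : ℤ_[p][X]} (hf : f.Monic) :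
    Ideal.span {f, derivative f} = ⊤ ↔ Squarefree (f.map toZMod) := by
  have hker : RingHom.ker (toZMod : ℤ_[p] →+* ZMod p) ≤ Ideal.jacobson ⊥ := by
    rw [ker_toZMod, IsLocalRing.jacobson_eq_maximalIdeal ⊥ bot_ne_top]
  rw [← PerfectField.separable_iff_squarefree, separable_def, derivative_map,
    hf.isCoprime_map_iff (ZMod.ringHom_surjective _) hker, Ideal.span_insert,
    Ideal.sup_eq_top_iff_isCoprime]

end PadicInt

open PadicInt in
theorem measure_separable (p : ℕ) [Fact p.Prime] (d : ℕ) (hd : 2 ≤ d) :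
    Measure.pi (fun _ : Fin d => padicHaar p)
      {a : Fin d → ℤ_[p] |
        Ideal.span {monicOf d a, derivative (monicOf d a)} = (⊤ : Ideal (Polynomial ℤ_[p]))} =
      1 - (p : ENNReal)⁻¹ := by
  have hset : {a : Fin d → ℤ_[p] | Ideal.span {monicOf d a, derivative (monicOf d a)} = ⊤} =
      (fun a i ↦ (toZMod : ℤ_[p] →+* ZMod p).toAddMonoidHom (a i)) ⁻¹'
        {t | Squarefree (monicOf d t)} := by
    ext a
    simp [span_monic_derivative_eq_top_iff (monic_monicOf a), map_monicOf, Function.comp_def]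
  have hsurj : Function.Surjective (toZMod : ℤ_[p] →+* ZMod p).toAddMonoidHom :=
    ZMod.ringHom_surjective toZMod
  rw [hset, measure_pi_preimage_eq _ hsurj measurableSet_ker_toZMod,
    ncard_setOf_squarefree_monicOf _ hd, ZMod.card, Fintype.card_fin]
  exact ENNReal.natCast_pow_sub_pow_pred_mul_inv_pow (Fact.out : p.Prime).ne_zero (by omega)

end
end

section
/- Let p be a prime and d ≥ 2 an integer. The number of separable monic polynomials of degree d in (ℤ/pℤ)[x] (polynomials f with (f, f') = (ℤ/pℤ)[x]) equals p^d (1 − 1/p) = p^d − p^{d−1}. -/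
open Polynomial UniqueFactorizationMonoid

section Carlitz

variable {K : Type*} [Field K]

private lemma carlitz_uniq {s h s' h' : K[X]} (hs : s.Monic) (hsq : Squarefree s)
    (hh : h.Monic) (hs' : s'.Monic) (hsq' : Squarefree s') (hh' : h'.Monic)
    (heq : s * h ^ 2 = s' * h' ^ 2) : s = s' ∧ h = h' := by
  classical
  have hhe : h = h' := by
    have hfac : normalizedFactors s + 2 • normalizedFactors h
        = normalizedFactors s' + 2 • normalizedFactors h' := by
      have := congrArg normalizedFactors heq
      rwa [normalizedFactors_mul hs.ne_zero (pow_ne_zero 2 hh.ne_zero),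
        normalizedFactors_mul hs'.ne_zero (pow_ne_zero 2 hh'.ne_zero),
        normalizedFactors_pow, normalizedFactors_pow] at this
    have hcount : ∀ a, (normalizedFactors h).count a = (normalizedFactors h').count a := by
      intro a
      have h1 : (normalizedFactors s).count a ≤ 1 :=
        Multiset.nodup_iff_count_le_one.mp
          ((squarefree_iff_nodup_normalizedFactors hs.ne_zero).mp hsq) a
      have h2 : (normalizedFactors s').count a ≤ 1 :=
        Multiset.nodup_iff_count_le_one.mp
          ((squarefree_iff_nodup_normalizedFactors hs'.ne_zero).mp hsq') a
      have := congrArg (Multiset.count a) hfac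
      simp only [Multiset.count_add, Multiset.count_nsmul] at this
      omega
    exact eq_of_monic_of_associated hh hh'
      ((associated_iff_normalizedFactors_eq_normalizedFactors hh.ne_zero hh'.ne_zero).mpr
        (Multiset.ext.mpr hcount))
  refine ⟨?_, hhe⟩
  subst hhe
  exact mul_right_cancel₀ (pow_ne_zero 2 hh.ne_zero) heq

private lemma carlitz_exists : ∀ (n : ℕ) (f : K[X]), f.Monic → f.natDegree = n →
    ∃ s h : K[X], s.Monic ∧ Squarefree s ∧ h.Monic ∧ f = s * h ^ 2 := by
  intro n
  induction n using Nat.strong_induction_on with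
  | _ n ih =>
    intro f hf hn
    by_cases hsq : Squarefree f
    · exact ⟨f, 1, hf, hsq, monic_one, by ring⟩
    · simp only [Squarefree, not_forall] at hsq
      obtain ⟨x, hxd, hxu⟩ := hsq
      have hx0 : x ≠ 0 := by
        rintro rfl
        exact hf.ne_zero (by simpa using hxd)
      set y := x * C x.leadingCoeff⁻¹ with hy
      have hym : y.Monic := monic_mul_leadingCoeff_inv hx0
      have hlc : x.leadingCoeff ≠ 0 := leadingCoeff_ne_zero.mpr hx0
      have h1 : C x.leadingCoeff⁻¹ * C x.leadingCoeff = 1 := by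
        rw [← C_mul, inv_mul_cancel₀ hlc, C_1]
      have hyd : y * y ∣ f := by
        refine dvd_trans ⟨C x.leadingCoeff * C x.leadingCoeff, ?_⟩ hxd
        rw [hy]
        linear_combination (-(x^2) * (C x.leadingCoeff⁻¹ * C x.leadingCoeff + 1)) * h1
      obtain ⟨g, hg⟩ := hyd
      have hgm : g.Monic := (hym.mul hym).of_mul_monic_left (hg ▸ hf)
      have hy1 : 1 ≤ y.natDegree := by
        by_contra hc
        push_neg at hc
        have : y = 1 := hym.natDegree_eq_zero.mp (by omega)
        apply hxu
        have : IsUnit y := this ▸ isUnit_one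
        rw [hy] at this
        exact isUnit_of_mul_isUnit_left this
      have hdeg : f.natDegree = y.natDegree + y.natDegree + g.natDegree := by
        rw [hg, (hym.mul hym).natDegree_mul hgm, hym.natDegree_mul hym]
      obtain ⟨s, h, hsm, hssq, hhm, hsh⟩ := ih g.natDegree (by omega) g hgm rfl
      exact ⟨s, y * h, hsm, hssq, hym.mul hhm, by rw [hg, hsh]; ring⟩

variable [Fintype K]

private lemma carlitz_card_monic (n : ℕ) :
    Nat.card {f : K[X] // f.Monic ∧ f.natDegree = n} = Fintype.card K ^ n := by
  rw [Nat.card_congr ((monicEquivDegreeLT n).trans (degreeLTEquiv K n).toEquiv)]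
  simp [Nat.card_eq_fintype_card]

private noncomputable instance (n : ℕ) : Fintype {f : K[X] // f.Monic ∧ f.natDegree = n} :=
  Fintype.ofEquiv _ ((monicEquivDegreeLT n).trans (degreeLTEquiv K n).toEquiv).symm

private noncomputable instance (n : ℕ) :
    Fintype {f : K[X] // f.Monic ∧ f.natDegree = n ∧ Squarefree f} :=
  Fintype.ofInjective
    (fun x => (⟨x.1, x.2.1, x.2.2.1⟩ : {f : K[X] // f.Monic ∧ f.natDegree = n}))
    (fun a b hab => by
      simp only [Subtype.mk.injEq] at hab
      exact Subtype.ext hab)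

private lemma carlitz_key (n : ℕ) :
    ∑ j ∈ Finset.range (n / 2 + 1),
      Nat.card {f : K[X] // f.Monic ∧ f.natDegree = n - 2 * j ∧ Squarefree f} *
        Fintype.card K ^ j = Fintype.card K ^ n := by
  classical
  rw [← carlitz_card_monic n]
  have e : (Σ j : Fin (n / 2 + 1),
      {s : K[X] // s.Monic ∧ s.natDegree = n - 2 * (j : ℕ) ∧ Squarefree s} ×
        {h : K[X] // h.Monic ∧ h.natDegree = (j : ℕ)}) ≃
      {f : K[X] // f.Monic ∧ f.natDegree = n} := by
    refine Equiv.ofBijective (fun x => ⟨x.2.1.1 * x.2.2.1 ^ 2,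
      x.2.1.2.1.mul (x.2.2.2.1.pow 2), ?_⟩) ⟨?_, ?_⟩
    · obtain ⟨j, ⟨s, hsm, hsd, hssq⟩, ⟨h, hhm, hhd⟩⟩ := x
      have hj : (j : ℕ) ≤ n / 2 := by omega
      simp only [hsm.natDegree_mul (hhm.pow 2), natDegree_pow, hsd, hhd]
      omega
    · rintro ⟨j, ⟨s, hsm, hsd, hssq⟩, ⟨h, hhm, hhd⟩⟩ ⟨j', ⟨s', hsm', hsd', hssq'⟩, ⟨h', hhm', hhd'⟩⟩ hab
      simp only [Subtype.mk.injEq] at hab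
      have heq : s * h ^ 2 = s' * h' ^ 2 := hab
      obtain ⟨hse, hhe⟩ := carlitz_uniq hsm hssq hhm hsm' hssq' hhm' heq
      have hje : j = j' := by
        apply Fin.ext
        rw [← hhd, ← hhd', hhe]
      subst hje hse hhe
      rfl
    · rintro ⟨f, hfm, hfd⟩
      obtain ⟨s, h, hsm, hssq, hhm, hsh⟩ := carlitz_exists f.natDegree f hfm rfl
      have hdeg : f.natDegree = s.natDegree + 2 * h.natDegree := by
        rw [hsh, hsm.natDegree_mul (hhm.pow 2), natDegree_pow]
      have hj : h.natDegree < n / 2 + 1 := by omega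
      refine ⟨⟨⟨h.natDegree, hj⟩, ⟨s, hsm, by simp only [Fin.val_mk]; omega, hssq⟩, ⟨h, hhm, rfl⟩⟩, ?_⟩
      exact Subtype.ext hsh.symm
  rw [← Nat.card_congr e]
  rw [Nat.card_eq_fintype_card, Fintype.card_sigma]
  rw [Fin.sum_univ_eq_sum_range (fun j => Fintype.card
    ({s : K[X] // s.Monic ∧ s.natDegree = n - 2 * j ∧ Squarefree s} ×
      {h : K[X] // h.Monic ∧ h.natDegree = j}))]
  refine Finset.sum_congr rfl fun j hj => ?_
  rw [Fintype.card_prod,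
    ← Nat.card_eq_fintype_card (α := {s : K[X] // s.Monic ∧ s.natDegree = n - 2 * j ∧ Squarefree s}),
    ← Nat.card_eq_fintype_card (α := {h : K[X] // h.Monic ∧ h.natDegree = j}),
    carlitz_card_monic]

end Carlitz

theorem card_separable_monic_zmod_p (p : ℕ) [Fact p.Prime] (d : ℕ) (hd : 2 ≤ d) :
    Nat.card {f : Polynomial (ZMod p) // f.Monic ∧ f.natDegree = d ∧
        Ideal.span {f, derivative f} = (⊤ : Ideal (Polynomial (ZMod p)))} =
      p ^ d - p ^ (d - 1) := by
  have hiff : ∀ f : (ZMod p)[X],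
      (Ideal.span {f, derivative f} = (⊤ : Ideal ((ZMod p)[X]))) ↔ Squarefree f := by
    intro f
    rw [Ideal.span_insert, Ideal.sup_eq_top_iff_isCoprime,
      ← Polynomial.separable_def, PerfectField.separable_iff_squarefree]
  rw [Nat.card_congr (Equiv.subtypeEquivRight (fun f =>
    and_congr_right fun _ => and_congr_right fun _ => hiff f))]
  have hq : Fintype.card (ZMod p) = p := ZMod.card p
  have key_d := carlitz_key (K := ZMod p) d
  have key_d2 := carlitz_key (K := ZMod p) (d - 2)
  rw [Finset.sum_range_succ'] at key_d
  have hsum : ∑ i ∈ Finset.range (d / 2),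
      Nat.card {f : (ZMod p)[X] // f.Monic ∧ f.natDegree = d - 2 * (i + 1) ∧ Squarefree f} *
        Fintype.card (ZMod p) ^ (i + 1) = Fintype.card (ZMod p) ^ (d - 1) := by
    have hd2 : d / 2 = (d - 2) / 2 + 1 := by omega
    rw [hd2]
    have : ∀ i ∈ Finset.range ((d - 2) / 2 + 1),
        Nat.card {f : (ZMod p)[X] // f.Monic ∧ f.natDegree = d - 2 * (i + 1) ∧ Squarefree f} *
          Fintype.card (ZMod p) ^ (i + 1) =
        (Nat.card {f : (ZMod p)[X] // f.Monic ∧ f.natDegree = d - 2 - 2 * i ∧ Squarefree f} *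
          Fintype.card (ZMod p) ^ i) * Fintype.card (ZMod p) := by
      intro i _
      have h : d - 2 * (i + 1) = d - 2 - 2 * i := by omega
      rw [h, pow_succ]
      ring
    rw [Finset.sum_congr rfl this, ← Finset.sum_mul, key_d2, ← pow_succ]
    congr 1
    omega
  rw [hsum] at key_d
  simp only [Nat.mul_zero, Nat.sub_zero, mul_one, pow_zero, hq] at key_d
  omega
end

section
/- Let p be a prime and k ≥ 1, d ≥ 2 integers. The number of monic polynomials f of degree d in (ℤ/p^kℤ)[x] satisfying (f, f') = (ℤ/p^kℤ)[x] equals p^{dk}(1 − 1/p). -/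
open Polynomial

section Helpers

/-- Coefficient description of the monic-polynomial parametrization. -/
noncomputable def monicEquiv (R : Type*) [CommRing R] [Nontrivial R] (d : ℕ) :
    { p : R[X] // p.Monic ∧ p.natDegree = d } ≃ (Fin d → R) :=
  (monicEquivDegreeLT d).trans (degreeLTEquiv R d).toEquiv

lemma monicEquiv_apply {R : Type*} [CommRing R] [Nontrivial R] {d : ℕ}
    (f : { p : R[X] // p.Monic ∧ p.natDegree = d }) (i : Fin d) :
    monicEquiv R d f i = (f : R[X]).coeff i := by
  obtain ⟨f, hm, hd⟩ := f
  simp only [monicEquiv, Equiv.trans_apply, degreeLTEquiv, LinearEquiv.coe_toEquiv,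
    LinearEquiv.coe_mk, monicEquivDegreeLT]
  simp only [Equiv.coe_fn_mk]
  exact eraseLead_coeff_of_ne _ (by omega)

instance finiteMonic (R : Type*) [CommRing R] [Nontrivial R] [Finite R] (d : ℕ) :
    Finite { p : R[X] // p.Monic ∧ p.natDegree = d } :=
  Finite.of_equiv _ (monicEquiv R d).symm

lemma card_monic (R : Type*) [CommRing R] [Nontrivial R] [Finite R] (d : ℕ) :
    Nat.card { p : R[X] // p.Monic ∧ p.natDegree = d } = Nat.card R ^ d := by
  rw [Nat.card_congr (monicEquiv R d), Nat.card_fun]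
  simp

lemma natCard_sigma {ι : Type*} [Fintype ι] (f : ι → Type*) [∀ i, Finite (f i)] :
    Nat.card (Σ i, f i) = ∑ i, Nat.card (f i) := by
  have : ∀ i, Fintype (f i) := fun i => Fintype.ofFinite _
  simp [Nat.card_eq_fintype_card, Fintype.card_sigma]

/-- A section-based fibration count. -/
def sectionEquiv {M N : Type*} [AddCommGroup M] [AddGroup N] (φ : M →+ N) (s : N → M)
    (hs : ∀ y, φ (s y) = y) (P : N → Prop) :
    { m : M // P (φ m) } ≃ { n : N // P n } × { m : M // φ m = 0 } where
  toFun m := (⟨φ m.1, m.2⟩, ⟨m.1 - s (φ m.1), by simp [hs]⟩)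
  invFun x := ⟨s x.1.1 + x.2.1, by simpa [hs, x.2.2] using x.1.2⟩
  left_inv m := by
    apply Subtype.ext
    simp
  right_inv x := by
    obtain ⟨⟨n, hn⟩, ⟨m, hm⟩⟩ := x
    simp [hs, hm]

end Helpers

section FieldCount

variable {F : Type*} [Field F] [Finite F]

local notation "q" => Nat.card F

/-- Existence of the squarefree-square decomposition. -/
lemma exists_sq_decomp_aux : ∀ n (f : F[X]), f.Monic → f.natDegree ≤ n →
    ∃ s g : F[X], s.Monic ∧ Squarefree s ∧ g.Monic ∧ f = s * g ^ 2 := by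
  intro n
  induction n with
  | zero =>
    intro f hf hd
    refine ⟨1, 1, monic_one, squarefree_one, monic_one, ?_⟩
    rw [hf.natDegree_eq_zero.1 (Nat.le_zero.1 hd)]; ring
  | succ n ih =>
    intro f hf hd
    by_cases hsq : Squarefree f
    · exact ⟨f, 1, hf, hsq, monic_one, by ring⟩
    · simp only [Squarefree, not_forall] at hsq
      obtain ⟨x, hxdvd, hxu⟩ := hsq
      have hx0 : x ≠ 0 := by
        rintro rfl
        exact hf.ne_zero (by simpa using hxdvd)
      set y : F[X] := x * C x.leadingCoeff⁻¹ with hy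
      have hym : y.Monic := monic_mul_leadingCoeff_inv hx0
      have hc0 : x.leadingCoeff ≠ 0 := leadingCoeff_ne_zero.2 hx0
      have hxy : x = y * C x.leadingCoeff := by
        rw [hy, mul_assoc, ← C_mul, inv_mul_cancel₀ hc0, C_1, mul_one]
      have hxx : x * x = y * y * (C x.leadingCoeff * C x.leadingCoeff) := by
        conv_lhs => rw [hxy]
        ring
      have hydvd : y * y ∣ f := dvd_trans ⟨C x.leadingCoeff * C x.leadingCoeff, hxx⟩ hxdvd
      have hypos : 0 < y.natDegree := by
        rcases Nat.eq_zero_or_pos y.natDegree with h | h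
        swap
        · exact h
        · exfalso
          apply hxu
          have : IsUnit y := hym.natDegree_eq_zero.1 h ▸ isUnit_one
          have hu : IsUnit (C x.leadingCoeff⁻¹) := isUnit_C.2 (by
            exact (inv_ne_zero (leadingCoeff_ne_zero.2 hx0)).isUnit)
          exact (isUnit_of_mul_isUnit_left (by rwa [hy] at this))
      obtain ⟨h, hfh⟩ := hydvd
      have hyym : (y * y).Monic := hym.mul hym
      have hhm : h.Monic := hyym.of_mul_monic_left (hfh ▸ hf)
      have hhd : h.natDegree ≤ n := by
        have hdeg : f.natDegree = (y*y).natDegree + h.natDegree := by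
          rw [hfh, hyym.natDegree_mul hhm]
        have : (y*y).natDegree = 2 * y.natDegree := by
          rw [hym.natDegree_mul hym]; ring
        omega
      obtain ⟨s, g, hsm, hssq, hgm, hdec⟩ := ih h hhm hhd
      exact ⟨s, y * g, hsm, hssq, hym.mul hgm, by rw [hfh, hdec]; ring⟩

lemma sq_decomp_unique {s₁ s₂ g₁ g₂ : F[X]} (hs₁ : s₁.Monic) (hq₁ : Squarefree s₁)
    (hs₂ : s₂.Monic) (hq₂ : Squarefree s₂) (hg₁ : g₁.Monic) (hg₂ : g₂.Monic)
    (h : s₁ * g₁ ^ 2 = s₂ * g₂ ^ 2) : s₁ = s₂ ∧ g₁ = g₂ := by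
  classical
  have hg : g₁ = g₂ := by
    have hs₁0 := hs₁.ne_zero; have hs₂0 := hs₂.ne_zero
    have hg₁0 := hg₁.ne_zero; have hg₂0 := hg₂.ne_zero
    have hnf : UniqueFactorizationMonoid.normalizedFactors s₁ +
        2 • UniqueFactorizationMonoid.normalizedFactors g₁ =
        UniqueFactorizationMonoid.normalizedFactors s₂ +
        2 • UniqueFactorizationMonoid.normalizedFactors g₂ := by
      rw [← UniqueFactorizationMonoid.normalizedFactors_pow,
        ← UniqueFactorizationMonoid.normalizedFactors_pow,
        ← UniqueFactorizationMonoid.normalizedFactors_mul hs₁0 (pow_ne_zero _ hg₁0),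
        ← UniqueFactorizationMonoid.normalizedFactors_mul hs₂0 (pow_ne_zero _ hg₂0), h]
    have hnd₁ := (UniqueFactorizationMonoid.squarefree_iff_nodup_normalizedFactors hs₁0).1 hq₁
    have hnd₂ := (UniqueFactorizationMonoid.squarefree_iff_nodup_normalizedFactors hs₂0).1 hq₂
    have hnfg : UniqueFactorizationMonoid.normalizedFactors g₁ =
        UniqueFactorizationMonoid.normalizedFactors g₂ := by
      ext a
      have hc := congrArg (Multiset.count a) hnf
      simp only [Multiset.count_add, Multiset.count_nsmul] at hc
      have h1 : Multiset.count a (UniqueFactorizationMonoid.normalizedFactors s₁) ≤ 1 :=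
        Multiset.nodup_iff_count_le_one.1 hnd₁ a
      have h2 : Multiset.count a (UniqueFactorizationMonoid.normalizedFactors s₂) ≤ 1 :=
        Multiset.nodup_iff_count_le_one.1 hnd₂ a
      omega
    exact eq_of_monic_of_associated hg₁ hg₂
      ((UniqueFactorizationMonoid.associated_iff_normalizedFactors_eq_normalizedFactors
        hg₁0 hg₂0).2 hnfg)
  subst hg
  exact ⟨mul_right_cancel₀ (pow_ne_zero _ hg₁.ne_zero) h, rfl⟩

variable (F) in
/-- The squarefree-square decomposition, as a bijection. -/
noncomputable def sqDecomp (d : ℕ) :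
    (Σ j : Fin (d / 2 + 1), { s : F[X] // s.Monic ∧ s.natDegree = d - 2 * j ∧ Squarefree s } ×
      { g : F[X] // g.Monic ∧ g.natDegree = j }) ≃
    { f : F[X] // f.Monic ∧ f.natDegree = d } := by
  apply Equiv.ofBijective (fun x =>
    ⟨x.2.1.1 * x.2.2.1 ^ 2, (x.2.1.2.1.mul (x.2.2.2.1.pow 2)), by
      obtain ⟨j, ⟨s, hsm, hsd, hsq⟩, ⟨g, hgm, hgd⟩⟩ := x
      have h2j : 2 * (j : ℕ) ≤ d := by have := j.2; omega
      show (s * g ^ 2).natDegree = d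
      rw [hsm.natDegree_mul (hgm.pow 2), hsd, hgm.natDegree_pow, hgd]
      omega⟩)
  constructor
  · rintro ⟨j₁, ⟨s₁, hsm₁, hsd₁, hsq₁⟩, ⟨g₁, hgm₁, hgd₁⟩⟩ ⟨j₂, ⟨s₂, hsm₂, hsd₂, hsq₂⟩, ⟨g₂, hgm₂, hgd₂⟩⟩ h
    simp only [Subtype.mk.injEq] at h
    obtain ⟨hse, hge⟩ := sq_decomp_unique hsm₁ hsq₁ hsm₂ hsq₂ hgm₁ hgm₂ h
    have : j₁ = j₂ := by
      apply Fin.ext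
      rw [← hgd₁, ← hgd₂, hge]
    subst this; subst hse; subst hge
    rfl
  · rintro ⟨f, hfm, hfd⟩
    obtain ⟨s, g, hsm, hssq, hgm, hdec⟩ := exists_sq_decomp_aux f.natDegree f hfm le_rfl
    have hdeg : f.natDegree = s.natDegree + 2 * g.natDegree := by
      rw [hdec, hsm.natDegree_mul (hgm.pow 2), hgm.natDegree_pow]
    subst hfd
    refine ⟨⟨⟨g.natDegree, by omega⟩, ⟨s, hsm, by simp only; omega, hssq⟩, ⟨g, hgm, rfl⟩⟩, ?_⟩
    exact Subtype.ext hdec.symm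


instance finiteSF (m : ℕ) : Finite { s : F[X] // s.Monic ∧ s.natDegree = m ∧ Squarefree s } :=
  Finite.of_injective (fun x => (⟨x.1, x.2.1, x.2.2.1⟩ :
    { f : F[X] // f.Monic ∧ f.natDegree = m })) (fun a b hab => Subtype.ext (congrArg (fun t => t.1) hab))

variable (F) in
lemma card_sq_recursion (d : ℕ) :
    (Nat.card F) ^ d = ∑ j ∈ Finset.range (d / 2 + 1),
      Nat.card { s : F[X] // s.Monic ∧ s.natDegree = d - 2 * j ∧ Squarefree s } * Nat.card F ^ j := by
  have := Nat.card_congr (sqDecomp F d)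
  rw [natCard_sigma] at this
  rw [← card_monic F d, ← this]
  rw [← Fin.sum_univ_eq_sum_range (fun j => Nat.card
    { s : F[X] // s.Monic ∧ s.natDegree = d - 2 * j ∧ Squarefree s } * Nat.card F ^ j)]
  exact Finset.sum_congr rfl fun j _ => by rw [Nat.card_prod, card_monic]

variable (F) in
lemma card_squarefree (d : ℕ) (hd : 2 ≤ d) :
    Nat.card { s : F[X] // s.Monic ∧ s.natDegree = d ∧ Squarefree s } =
      Nat.card F ^ d - Nat.card F ^ (d - 1) := by
  have A := card_sq_recursion F d
  have B := card_sq_recursion F (d - 2)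
  rw [Finset.sum_range_succ'] at A
  have hhalf : d / 2 = (d - 2) / 2 + 1 := by omega
  have hsum : ∑ j ∈ Finset.range (d / 2),
      Nat.card { s : F[X] // s.Monic ∧ s.natDegree = d - 2 * (j + 1) ∧ Squarefree s } *
        Nat.card F ^ (j + 1) = Nat.card F ^ (d - 1) := by
    have : ∀ j, d - 2 * (j + 1) = d - 2 - 2 * j := by omega
    calc ∑ j ∈ Finset.range (d / 2),
        Nat.card { s : F[X] // s.Monic ∧ s.natDegree = d - 2 * (j + 1) ∧ Squarefree s } *
          Nat.card F ^ (j + 1)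
        = Nat.card F * ∑ j ∈ Finset.range ((d - 2) / 2 + 1),
          Nat.card { s : F[X] // s.Monic ∧ s.natDegree = d - 2 - 2 * j ∧ Squarefree s } *
            Nat.card F ^ j := by
          rw [Finset.mul_sum, hhalf]
          refine Finset.sum_congr rfl fun j _ => ?_
          rw [this j, pow_succ]
          ring
      _ = Nat.card F * Nat.card F ^ (d - 2) := by rw [← B]
      _ = Nat.card F ^ (d - 1) := by
          rw [← pow_succ']
          congr 1
          omega
  simp only [Nat.mul_zero, Nat.sub_zero, pow_zero, Nat.mul_one] at A
  rw [hsum] at A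
  omega

end FieldCount


section Main

variable (p : ℕ) [Fact p.Prime] (k : ℕ)

local notation "R" => ZMod (p ^ k)
local notation "F" => ZMod p

variable (hk : 1 ≤ k)

/-- The reduction map. -/
noncomputable def redHom : ZMod (p ^ k) →+* ZMod p :=
  ZMod.castHom (dvd_pow_self p (by omega)) (ZMod p)

lemma redHom_surjective : Function.Surjective ⇑(redHom p k hk) := by
  haveI : NeZero p := ⟨(Fact.out : p.Prime).ne_zero⟩
  intro y
  obtain ⟨n, rfl⟩ := ZMod.natCast_zmod_surjective (n := p) y
  exact ⟨(n : R), by simp [redHom]⟩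

lemma ker_nilpotent (e : Polynomial R) (he : e.map (redHom p k hk) = 0) : IsNilpotent e := by
  have hp := (Fact.out : p.Prime)
  rw [Polynomial.isNilpotent_iff]
  intro i
  have hc : (redHom p k hk) (e.coeff i) = 0 := by
    rw [← Polynomial.coeff_map, he, Polynomial.coeff_zero]
  haveI : NeZero (p ^ k) := ⟨pow_ne_zero k hp.ne_zero⟩
  obtain ⟨n, hn⟩ := ZMod.natCast_zmod_surjective (n := p ^ k) (e.coeff i)
  rw [← hn] at hc ⊢
  rw [map_natCast] at hc
  obtain ⟨m, rfl⟩ := (ZMod.natCast_eq_zero_iff n p).1 hc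
  refine ⟨k, ?_⟩
  push_cast
  rw [mul_pow, ← Nat.cast_pow, ZMod.natCast_self, zero_mul]

lemma span_top_iff (f : Polynomial R) :
    Ideal.span {f, derivative f} = ⊤ ↔ (f.map (redHom p k hk)).Separable := by
  constructor
  · intro h
    have h1 : (1 : Polynomial R) ∈ Ideal.span {f, derivative f} := h ▸ Submodule.mem_top
    obtain ⟨a, b, hab⟩ := Ideal.mem_span_pair.1 h1
    refine ⟨a.map (redHom p k hk), b.map (redHom p k hk), ?_⟩
    have := congrArg (Polynomial.map (redHom p k hk)) hab
    simpa [Polynomial.derivative_map] using this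
  · rintro ⟨a', b', hab⟩
    obtain ⟨a, rfl⟩ := Polynomial.map_surjective _ (redHom_surjective p k hk) a'
    obtain ⟨b, rfl⟩ := Polynomial.map_surjective _ (redHom_surjective p k hk) b'
    have hmem : a * f + b * derivative f ∈ Ideal.span {f, derivative f} :=
      Ideal.mem_span_pair.2 ⟨a, b, rfl⟩
    apply Ideal.eq_top_of_isUnit_mem _ hmem
    have he : (1 - (a * f + b * derivative f)).map (redHom p k hk) = 0 := by
      simp only [Polynomial.map_sub, Polynomial.map_one, Polynomial.map_add, Polynomial.map_mul]
      rw [← Polynomial.derivative_map, hab, sub_self]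
    have : a * f + b * derivative f = 1 - (1 - (a * f + b * derivative f)) := by ring
    rw [this]
    exact (ker_nilpotent p k hk _ he).isUnit_one_sub

end Main


section Assemble

variable (p : ℕ) [Fact p.Prime] (k : ℕ)

lemma hs_section (hk : 1 ≤ k) :
    ∀ y : ZMod p, redHom p k hk ((y.val : ℕ) : ZMod (p ^ k)) = y := by
  haveI : NeZero p := ⟨(Fact.out : p.Prime).ne_zero⟩
  intro y
  rw [map_natCast]
  simp [ZMod.natCast_val, ZMod.cast_id]

lemma card_ker (hk : 1 ≤ k) :
    Nat.card {x : ZMod (p ^ k) // redHom p k hk x = 0} = p ^ (k - 1) := by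
  haveI : NeZero p := ⟨(Fact.out : p.Prime).ne_zero⟩
  have e := sectionEquiv (redHom p k hk).toAddMonoidHom (fun y => ((y.val : ℕ) : ZMod (p ^ k)))
    (hs_section p k hk) (fun _ => True)
  have e2 : {x : ZMod (p ^ k) // (redHom p k hk).toAddMonoidHom x = 0} ≃
      {x : ZMod (p ^ k) // redHom p k hk x = 0} := Equiv.subtypeEquivRight (fun x => Iff.rfl)
  have e' : {m : ZMod (p ^ k) // True} ≃ {n : ZMod p // True} ×
      {x : ZMod (p ^ k) // redHom p k hk x = 0} :=
    e.trans (Equiv.prodCongr (Equiv.refl _) e2)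
  have h1 : (p : ℕ) ^ k = p * Nat.card {x : ZMod (p ^ k) // redHom p k hk x = 0} := calc
    (p : ℕ) ^ k = Nat.card (ZMod (p ^ k)) := (Nat.card_zmod _).symm
    _ = Nat.card {m : ZMod (p ^ k) // True} :=
      (Nat.card_congr (Equiv.subtypeUnivEquiv fun _ => trivial)).symm
    _ = Nat.card ({n : ZMod p // True} × {x : ZMod (p ^ k) // redHom p k hk x = 0}) :=
      Nat.card_congr e'
    _ = Nat.card {n : ZMod p // True} * Nat.card {x : ZMod (p ^ k) // redHom p k hk x = 0} :=
      Nat.card_prod _ _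
    _ = p * Nat.card {x : ZMod (p ^ k) // redHom p k hk x = 0} := by
      rw [Nat.card_congr (Equiv.subtypeUnivEquiv fun _ : ZMod p => trivial), Nat.card_zmod]
  have hp : 0 < p := (Fact.out : p.Prime).pos
  have h2 : (p : ℕ) ^ k = p * p ^ (k - 1) := by
    rw [← pow_succ']
    congr 1
    omega
  exact (Nat.eq_of_mul_eq_mul_left hp (h2 ▸ h1)).symm

variable (d : ℕ)

/-- The coefficientwise reduction, as an `AddMonoidHom`. -/
noncomputable def PhiPi (hk : 1 ≤ k) : (Fin d → ZMod (p ^ k)) →+ (Fin d → ZMod p) where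
  toFun c := fun i => redHom p k hk (c i)
  map_zero' := by funext i; simp
  map_add' a b := by funext i; simp

lemma monicEquiv_symm_map (hk : 1 ≤ k) [Nontrivial (ZMod (p ^ k))]
    (x : {f : Polynomial (ZMod (p ^ k)) // f.Monic ∧ f.natDegree = d}) :
    ((monicEquiv (ZMod p) d).symm (fun i => redHom p k hk (monicEquiv (ZMod (p ^ k)) d x i))
      : Polynomial (ZMod p)) = (x : Polynomial (ZMod (p ^ k))).map (redHom p k hk) := by
  have h : monicEquiv (ZMod p) d ⟨(x : Polynomial (ZMod (p ^ k))).map (redHom p k hk),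
      x.2.1.map _, by rw [x.2.1.natDegree_map]; exact x.2.2⟩ =
      fun i => redHom p k hk (monicEquiv (ZMod (p ^ k)) d x i) := by
    funext i
    rw [monicEquiv_apply, monicEquiv_apply]
    exact Polynomial.coeff_map _ _
  rw [← h, Equiv.symm_apply_apply]

theorem card_separable_monic_zmod_pk' (hk : 1 ≤ k) [Nontrivial (ZMod (p ^ k))] (hd : 2 ≤ d) :
    Nat.card {f : Polynomial (ZMod (p ^ k)) // f.Monic ∧ f.natDegree = d ∧
        Ideal.span {f, derivative f} = (⊤ : Ideal (Polynomial (ZMod (p ^ k))))} =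
      p ^ (d * k) - p ^ (d * k - 1) := by
  haveI : NeZero p := ⟨(Fact.out : p.Prime).ne_zero⟩
  set φ := redHom p k hk with hφ
  have s1 : Nat.card {f : Polynomial (ZMod (p ^ k)) // f.Monic ∧ f.natDegree = d ∧
      Ideal.span {f, derivative f} = (⊤ : Ideal (Polynomial (ZMod (p ^ k))))} =
      Nat.card {f : Polynomial (ZMod (p ^ k)) // (f.Monic ∧ f.natDegree = d) ∧
        (f.map φ).Separable} :=
    Nat.card_congr (Equiv.subtypeEquivRight (fun f =>
      ⟨fun ⟨a, b, c⟩ => ⟨⟨a, b⟩, (span_top_iff p k hk f).1 c⟩,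
       fun ⟨⟨a, b⟩, c⟩ => ⟨a, b, (span_top_iff p k hk f).2 c⟩⟩))
  have s2 : Nat.card {f : Polynomial (ZMod (p ^ k)) // (f.Monic ∧ f.natDegree = d) ∧
      (f.map φ).Separable} =
      Nat.card {x : {f : Polynomial (ZMod (p ^ k)) // f.Monic ∧ f.natDegree = d} //
        ((x : Polynomial (ZMod (p ^ k))).map φ).Separable} :=
    Nat.card_congr (Equiv.subtypeSubtypeEquivSubtypeInter _ _).symm
  have s3 : Nat.card {x : {f : Polynomial (ZMod (p ^ k)) // f.Monic ∧ f.natDegree = d} //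
      ((x : Polynomial (ZMod (p ^ k))).map φ).Separable} =
      Nat.card {c : Fin d → ZMod (p ^ k) //
        (((monicEquiv (ZMod p) d).symm (PhiPi p k d hk c) : Polynomial (ZMod p))).Separable} :=
    Nat.card_congr (Equiv.subtypeEquiv (monicEquiv (ZMod (p ^ k)) d) (fun x => by
      rw [show ((monicEquiv (ZMod p) d).symm (PhiPi p k d hk (monicEquiv (ZMod (p ^ k)) d x))
        : Polynomial (ZMod p)) = (x : Polynomial (ZMod (p ^ k))).map φ from
        monicEquiv_symm_map p k d hk x]))
  have s4 : Nat.card {c : Fin d → ZMod (p ^ k) //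
      (((monicEquiv (ZMod p) d).symm (PhiPi p k d hk c) : Polynomial (ZMod p))).Separable} =
      Nat.card {b : Fin d → ZMod p //
        (((monicEquiv (ZMod p) d).symm b : Polynomial (ZMod p))).Separable} *
      Nat.card {c : Fin d → ZMod (p ^ k) // PhiPi p k d hk c = 0} := by
    rw [Nat.card_congr (sectionEquiv (PhiPi p k d hk)
      (fun b i => (((b i).val : ℕ) : ZMod (p ^ k)))
      (fun b => funext fun i => hs_section p k hk (b i))
      (fun b => (((monicEquiv (ZMod p) d).symm b : Polynomial (ZMod p))).Separable)),
      Nat.card_prod]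
  have s5 : Nat.card {c : Fin d → ZMod (p ^ k) // PhiPi p k d hk c = 0} = (p ^ (k - 1)) ^ d := by
    have e : {c : Fin d → ZMod (p ^ k) // PhiPi p k d hk c = 0} ≃
        (Fin d → {x : ZMod (p ^ k) // redHom p k hk x = 0}) :=
      ⟨fun c i => ⟨c.1 i, congrFun c.2 i⟩, fun v => ⟨fun i => (v i).1, funext fun i => (v i).2⟩,
       fun c => by ext i; rfl, fun v => by ext i; rfl⟩
    rw [Nat.card_congr e, Nat.card_fun, card_ker p k hk]
    simp
  have s6 : Nat.card {b : Fin d → ZMod p //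
      (((monicEquiv (ZMod p) d).symm b : Polynomial (ZMod p))).Separable} =
      p ^ d - p ^ (d - 1) := by
    have e1 : {b : Fin d → ZMod p //
        (((monicEquiv (ZMod p) d).symm b : Polynomial (ZMod p))).Separable} ≃
        {x : {g : Polynomial (ZMod p) // g.Monic ∧ g.natDegree = d} //
          ((x : Polynomial (ZMod p))).Separable} :=
      Equiv.subtypeEquiv (monicEquiv (ZMod p) d).symm (fun b => Iff.rfl)
    rw [Nat.card_congr e1, Nat.card_congr (Equiv.subtypeSubtypeEquivSubtypeInter _ _),
      Nat.card_congr (Equiv.subtypeEquivRight (q := fun g : Polynomial (ZMod p) =>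
        g.Monic ∧ g.natDegree = d ∧ Squarefree g) (fun g =>
        ⟨fun ⟨⟨a, b⟩, c⟩ => ⟨a, b, PerfectField.separable_iff_squarefree.1 c⟩,
         fun ⟨a, b, c⟩ => ⟨⟨a, b⟩, PerfectField.separable_iff_squarefree.2 c⟩⟩)),
      card_squarefree (ZMod p) d hd, Nat.card_zmod]
  rw [s1, s2, s3, s4, s5, s6]
  obtain ⟨k', rfl⟩ : ∃ k', k = 1 + k' := ⟨k - 1, by omega⟩
  have h1 : ((p : ℕ) ^ (1 + k' - 1)) ^ d = p ^ (k' * d) := by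
    rw [← pow_mul, show 1 + k' - 1 = k' from by omega]
  rw [h1, Nat.sub_mul, ← pow_add, ← pow_add]
  congr 2
  · ring
  · cases d with
    | zero => omega
    | succ d' =>
      have h3 : (d' + 1) * (1 + k') = d' + 1 + k' * (d' + 1) := by ring
      generalize hA : (d' + 1) * (1 + k') = A at h3 ⊢
      generalize hB : k' * (d' + 1) = B at h3 ⊢
      omega

end Assemble


theorem card_separable_monic_zmod_pk (p : ℕ) [Fact p.Prime] (k d : ℕ)
    (hk : 1 ≤ k) (hd : 2 ≤ d) :
    Nat.card {f : Polynomial (ZMod (p ^ k)) // f.Monic ∧ f.natDegree = d ∧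
        Ideal.span {f, derivative f} = (⊤ : Ideal (Polynomial (ZMod (p ^ k))))} =
      p ^ (d * k) - p ^ (d * k - 1) := by
  haveI : Fact (1 < p ^ k) := ⟨Nat.one_lt_pow (by omega) (Fact.out : p.Prime).one_lt⟩
  exact card_separable_monic_zmod_pk' p k d hk hd
end

section
/- Let p be a prime and d, e ≥ 1 integers. The number of pairs (f, g) of monic polynomials over ℤ/pℤ with deg f = d, deg g = e, and (f, g) = (ℤ/pℤ)[x] equals p^{d+e}(1 − 1/p). -/
/-!
Of the `q ^ (d + e)` pairs of monic polynomials of degrees `d, e ≥ 1` over `𝔽_q`, the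
non-coprime ones correspond bijectively to `𝔽_q × {monic pairs of degrees d - 1, e - 1}`:
write the gcd as `h = h' * X + c` with `h'` monic of degree one less, and send `(f, g)` to
`(c, (h' * f / h, h' * g / h))`. The gcd of the image is `h'`, so `h = gcd F G * X + c` is
recovered from the image `(c, (F, G))`. Hence `q ^ (d + e - 1)` pairs are not coprime.
-/

open Polynomial

section ReplaceGcd

variable {R : Type*} [EuclideanDomain R] [NormalizedGCDMonoid R] {k : R} {xy : R × R}

theorem gcd_div_gcd_div_gcd_eq_one {x y : R} (h : gcd x y ≠ 0) :
    gcd (x / gcd x y) (y / gcd x y) = 1 := by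
  rw [← normalize_gcd, normalize_eq_one]
  exact isUnit_gcd_of_eq_mul_gcd (EuclideanDomain.mul_div_cancel' h (gcd_dvd_left x y)).symm
    (EuclideanDomain.mul_div_cancel' h (gcd_dvd_right x y)).symm h

def replaceGcd (k : R) (xy : R × R) : R × R :=
  (k * (xy.1 / gcd xy.1 xy.2), k * (xy.2 / gcd xy.1 xy.2))

theorem replaceGcd_gcd (xy : R × R) : replaceGcd (gcd xy.1 xy.2) xy = xy := by
  obtain ⟨x, y⟩ := xy
  by_cases h : gcd x y = 0
  · obtain ⟨rfl, rfl⟩ := (gcd_eq_zero_iff x y).mp h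
    simp [replaceGcd]
  · simp only [replaceGcd, EuclideanDomain.mul_div_cancel' h (gcd_dvd_left x y),
      EuclideanDomain.mul_div_cancel' h (gcd_dvd_right x y)]

theorem gcd_replaceGcd (hk : normalize k = k) (h : gcd xy.1 xy.2 ≠ 0) :
    gcd (replaceGcd k xy).1 (replaceGcd k xy).2 = k := by
  have hassoc := gcd_mul_left' k (xy.1 / gcd xy.1 xy.2) (xy.2 / gcd xy.1 xy.2)
  rw [gcd_div_gcd_div_gcd_eq_one h, mul_one] at hassoc
  rw [← normalize_gcd]
  exact (normalize_eq_normalize_iff_associated.mpr hassoc).trans hk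

theorem replaceGcd_replaceGcd (k' : R) (hk0 : k ≠ 0) (hk : normalize k = k)
    (h : gcd xy.1 xy.2 ≠ 0) : replaceGcd k' (replaceGcd k xy) = replaceGcd k' xy := by
  rw [replaceGcd, gcd_replaceGcd hk h]
  simp only [replaceGcd, mul_div_cancel_left₀ _ hk0]

end ReplaceGcd

namespace Polynomial

section Semiring

variable {R : Type*} [Semiring R] {p : R[X]} {n : ℕ}

theorem divX_mul_X_add_C (p : R[X]) (c : R) : divX (p * X + C c) = p := by
  ext n
  simp [coeff_divX]

theorem IsMonicOfDegree.divX [Nontrivial R] (hp : IsMonicOfDegree p (n + 1)) :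
    IsMonicOfDegree p.divX n := by
  rw [isMonicOfDegree_iff] at hp ⊢
  rw [natDegree_divX_eq_natDegree_tsub_one, coeff_divX]
  exact ⟨by omega, hp.2⟩

theorem IsMonicOfDegree.mul_X_add_C [Nontrivial R] (hp : IsMonicOfDegree p n) (c : R) :
    IsMonicOfDegree (p * X + C c) (n + 1) :=
  (hp.mul (isMonicOfDegree_X R)).add_right (by simp)

end Semiring

variable {K : Type*} [Field K] {f h k : K[X]} {d m n : ℕ}

theorem IsMonicOfDegree.mul_div_of_dvd {d' : ℕ} (hf : IsMonicOfDegree f d)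
    (hh : IsMonicOfDegree h m) (hk : IsMonicOfDegree k n) (hdvd : h ∣ f) (hd : d' + m = n + d) :
    IsMonicOfDegree (k * (f / h)) d' := by
  obtain ⟨a, rfl⟩ := hdvd
  have ha : IsMonicOfDegree a a.natDegree := ⟨rfl, hh.monic.of_mul_monic_left hf.monic⟩
  have hdeg : m + a.natDegree = d := (hh.mul ha).natDegree_eq.symm.trans hf.natDegree_eq
  rw [mul_div_cancel_left₀ _ hh.ne_zero]
  convert hk.mul ha using 1
  omega

theorem monic_gcd_of_ne_zero_left [DecidableEq K] (g : K[X]) (hf : f ≠ 0) :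
    (gcd f g).Monic := by
  simpa only [normalize_gcd] using monic_normalize (gcd_ne_zero_of_left (b := g) hf)

end Polynomial

def monicPairs (K : Type*) [Semiring K] (d e : ℕ) : Set (K[X] × K[X]) :=
  {f | IsMonicOfDegree f d} ×ˢ {g | IsMonicOfDegree g e}

section NonCoprime

variable {K : Type*} [Field K] [DecidableEq K] {fg : K[X] × K[X]} {d e : ℕ}

theorem gcd_ne_zero_of_mem_monicPairs (hfg : fg ∈ monicPairs K d e) : gcd fg.1 fg.2 ≠ 0 :=
  gcd_ne_zero_of_left hfg.1.ne_zero

theorem replaceGcd_mem_monicPairs {k : K[X]} {m n d' e' : ℕ} (hfg : fg ∈ monicPairs K d e)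
    (hgcd : IsMonicOfDegree (gcd fg.1 fg.2) m) (hk : IsMonicOfDegree k n)
    (hd : d' + m = n + d) (he : e' + m = n + e) : replaceGcd k fg ∈ monicPairs K d' e' :=
  ⟨hfg.1.mul_div_of_dvd hgcd hk (gcd_dvd_left _ _) hd,
    hfg.2.mul_div_of_dvd hgcd hk (gcd_dvd_right _ _) he⟩

theorem exists_isMonicOfDegree_gcd_succ (hfg : fg ∈ monicPairs K d e)
    (hu : ¬IsUnit (gcd fg.1 fg.2)) : ∃ m, IsMonicOfDegree (gcd fg.1 fg.2) (m + 1) := by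
  have hmonic := monic_gcd_of_ne_zero_left fg.2 hfg.1.ne_zero
  obtain ⟨m, hm⟩ := Nat.exists_eq_succ_of_ne_zero fun h0 ↦
    hu (hmonic.natDegree_eq_zero.mp h0 ▸ isUnit_one)
  exact ⟨m, hm, hmonic⟩

theorem replaceGcd_divX_gcd_mem_monicPairs (hfg : fg ∈ monicPairs K (d + 1) (e + 1))
    (hu : ¬IsUnit (gcd fg.1 fg.2)) :
    replaceGcd (gcd fg.1 fg.2).divX fg ∈ monicPairs K d e := by
  obtain ⟨m, hgcd⟩ := exists_isMonicOfDegree_gcd_succ hfg hu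
  exact replaceGcd_mem_monicPairs hfg hgcd hgcd.divX (by omega) (by omega)

theorem replaceGcd_mul_X_add_C_mem_monicPairs (hfg : fg ∈ monicPairs K d e) (c : K) :
    replaceGcd (gcd fg.1 fg.2 * X + C c) fg ∈ monicPairs K (d + 1) (e + 1) ∧
      ¬IsUnit (gcd (replaceGcd (gcd fg.1 fg.2 * X + C c) fg).1
        (replaceGcd (gcd fg.1 fg.2 * X + C c) fg).2) := by
  have hgcd : IsMonicOfDegree (gcd fg.1 fg.2) (gcd fg.1 fg.2).natDegree :=
    ⟨rfl, monic_gcd_of_ne_zero_left fg.2 hfg.1.ne_zero⟩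
  have hk := hgcd.mul_X_add_C c
  refine ⟨replaceGcd_mem_monicPairs hfg hgcd hk (by omega) (by omega), ?_⟩
  rw [gcd_replaceGcd hk.monic.normalize_eq_self (gcd_ne_zero_of_mem_monicPairs hfg)]
  exact fun hu ↦ absurd (natDegree_eq_zero_of_isUnit hu) (by rw [hk.natDegree_eq]; omega)

noncomputable def nonCoprimeMonicPairsEquiv (d e : ℕ) :
    {fg : K[X] × K[X] // fg ∈ monicPairs K (d + 1) (e + 1) ∧ ¬IsUnit (gcd fg.1 fg.2)} ≃
      K × monicPairs K d e where
  toFun fg := ((gcd fg.1.1 fg.1.2).coeff 0,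
    ⟨replaceGcd (gcd fg.1.1 fg.1.2).divX fg.1, replaceGcd_divX_gcd_mem_monicPairs fg.2.1 fg.2.2⟩)
  invFun cfg := ⟨replaceGcd (gcd cfg.2.1.1 cfg.2.1.2 * X + C cfg.1) cfg.2.1,
    replaceGcd_mul_X_add_C_mem_monicPairs cfg.2.2 cfg.1⟩
  left_inv := by
    rintro ⟨fg, hfg, hu⟩
    obtain ⟨m, hgcd⟩ := exists_isMonicOfDegree_gcd_succ hfg hu
    have hdivX := hgcd.divX
    have hne := gcd_ne_zero_of_mem_monicPairs hfg
    refine Subtype.ext ?_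
    dsimp only
    rw [gcd_replaceGcd hdivX.monic.normalize_eq_self hne, divX_mul_X_add,
      replaceGcd_replaceGcd _ hdivX.ne_zero hdivX.monic.normalize_eq_self hne, replaceGcd_gcd]
  right_inv := by
    rintro ⟨c, fg, hfg⟩
    have hne := gcd_ne_zero_of_mem_monicPairs hfg
    have hk : (gcd fg.1 fg.2 * X + C c).Monic :=
      (IsMonicOfDegree.mul_X_add_C ⟨rfl, monic_gcd_of_ne_zero_left fg.2 hfg.1.ne_zero⟩ c).monic
    have hgcd := gcd_replaceGcd hk.normalize_eq_self hne
    refine Prod.ext ?_ (Subtype.ext ?_)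
    · simp only [hgcd, coeff_add, mul_coeff_zero, coeff_X_zero, mul_zero, coeff_C_zero, zero_add]
    · simp only [hgcd, divX_mul_X_add_C,
        replaceGcd_replaceGcd _ hk.ne_zero hk.normalize_eq_self hne, replaceGcd_gcd]

end NonCoprime

theorem Nat.card_subtype_and_add_card_subtype_and_not {α : Type*} (P Q : α → Prop)
    [Finite {a // P a}] :
    Nat.card {a // P a ∧ Q a} + Nat.card {a // P a ∧ ¬Q a} = Nat.card {a // P a} :=
  Set.ncard_inter_add_ncard_sdiff_eq_ncard {a | P a} {a | Q a} (Set.finite_coe_iff.mp ‹_›)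

section Count

variable {R : Type*} [Semiring R] [Nontrivial R]

theorem card_isMonicOfDegree (n : ℕ) :
    Nat.card {p : R[X] // IsMonicOfDegree p n} = Nat.card R ^ n := by
  have e : {p : R[X] // IsMonicOfDegree p n} ≃ (Fin n → R) :=
    (Equiv.subtypeEquivRight fun p ↦ (isMonicOfDegree_iff' p n).trans and_comm).trans
      ((monicEquivDegreeLT n).trans (degreeLTEquiv R n).toEquiv)
  rw [Nat.card_congr e, Nat.card_fun, Nat.card_fin]

theorem card_monicPairs (d e : ℕ) : Nat.card (monicPairs R d e) = Nat.card R ^ (d + e) := by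
  rw [monicPairs, Nat.card_congr (Equiv.Set.prod _ _), Nat.card_prod, pow_add]
  exact congr_arg₂ _ (card_isMonicOfDegree d) (card_isMonicOfDegree e)

end Count

theorem card_coprime_monicPairs {K : Type*} [Field K] [Finite K] [DecidableEq K] {d e : ℕ}
    (hd : 1 ≤ d) (he : 1 ≤ e) :
    Nat.card {fg : K[X] × K[X] // fg ∈ monicPairs K d e ∧ IsUnit (gcd fg.1 fg.2)} =
      Nat.card K ^ (d + e) - Nat.card K ^ (d + e - 1) := by
  obtain ⟨d, rfl⟩ := Nat.exists_eq_add_of_le' hd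
  obtain ⟨e, rfl⟩ := Nat.exists_eq_add_of_le' he
  have : Finite (monicPairs K (d + 1) (e + 1)) := Nat.finite_of_card_ne_zero <| by
    rw [card_monicPairs]
    exact pow_ne_zero _ Nat.card_pos.ne'
  have hsplit := Nat.card_subtype_and_add_card_subtype_and_not
    (· ∈ monicPairs K (d + 1) (e + 1)) fun fg ↦ IsUnit (gcd fg.1 fg.2)
  rw [Nat.card_congr (nonCoprimeMonicPairsEquiv d e), Nat.card_prod, card_monicPairs,
    card_monicPairs, ← pow_succ'] at hsplit
  rw [show d + 1 + (e + 1) - 1 = d + e + 1 by omega]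
  omega

theorem card_strongly_coprime_pairs_zmod_p (p : ℕ) [Fact p.Prime] (d e : ℕ)
    (hd : 1 ≤ d) (he : 1 ≤ e) :
    Nat.card {fg : Polynomial (ZMod p) × Polynomial (ZMod p) //
        fg.1.Monic ∧ fg.1.natDegree = d ∧ fg.2.Monic ∧ fg.2.natDegree = e ∧
        Ideal.span {fg.1, fg.2} = (⊤ : Ideal (Polynomial (ZMod p)))} =
      p ^ (d + e) - p ^ (d + e - 1) := by
  have hspan (f g : (ZMod p)[X]) : Ideal.span {f, g} = ⊤ ↔ IsUnit (gcd f g) := by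
    rw [← span_gcd, Ideal.span_singleton_eq_top]
  have hcard := card_coprime_monicPairs (K := ZMod p) hd he
  rw [Nat.card_zmod] at hcard
  rw [← hcard]
  refine Nat.card_congr (Equiv.subtypeEquivRight fun fg ↦ ?_)
  simp only [monicPairs, Set.mem_prod, Set.mem_ofPred_eq, isMonicOfDegree_iff', hspan]
  tauto
end

section
/- Let p be a prime and f, g ∈ ℤ_p[x] monic polynomials of degree at least 1 such that the reductions of f and g modulo p generate the unit ideal of (ℤ/pℤ)[x]. Then given r_i, s_i ∈ (ℤ/p^{2^i}ℤ)[x] with r_i·(f mod p^{2^i}) + s_i·(g mod p^{2^i}) = 1, there exist r_{i+1}, s_{i+1} ∈ (ℤ/p^{2^{i+1}}ℤ)[x] with deg(r_{i+1}) < deg(g), deg(s_{i+1}) < deg(f), and r_{i+1}·(f mod p^{2^{i+1}}) + s_{i+1}·(g mod p^{2^{i+1}}) = 1. -/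
/-!
Since `ZMod (p ^ n) → ZMod p` is surjective with nilpotent kernel, so is the induced map on
polynomial rings, and a Bézout identity for `f, g` modulo `p` lifts to one modulo `p ^ n`: lift
the coefficients, and the resulting combination is `1` plus a nilpotent, hence a unit. Reducing
the first coefficient modulo the monic `g` gives the degree bound on it, and the bound on the
second one is forced by comparing degrees in the identity.
-/

open Polynomial

theorem IsCoprime.of_map_of_ker_isNilpotent {R S : Type*} [CommRing R] [CommRing S]
    {φ : R →+* S} (hφ : Function.Surjective φ) (hker : ∀ x, φ x = 0 → IsNilpotent x)
    {a b : R} (h : IsCoprime (φ a) (φ b)) : IsCoprime a b := by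
  obtain ⟨u, v, huv⟩ := h
  obtain ⟨u, rfl⟩ := hφ u
  obtain ⟨v, rfl⟩ := hφ v
  have hnil : IsNilpotent (u * a + v * b - 1) := hker _ (by simp [huv])
  obtain ⟨w, hw⟩ := sub_add_cancel (u * a + v * b) 1 ▸ hnil.isUnit_add_one
  refine ⟨↑w⁻¹ * u, ↑w⁻¹ * v, ?_⟩
  rw [mul_assoc, mul_assoc, ← mul_add, ← hw, Units.inv_mul]

theorem Polynomial.isNilpotent_of_map_eq_zero {R S : Type*} [CommRing R] [Semiring S]
    {φ : R →+* S} (hker : ∀ x, φ x = 0 → IsNilpotent x) {P : R[X]} (hP : P.map φ = 0) :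
    IsNilpotent P :=
  Polynomial.isNilpotent_iff.mpr fun j => hker _ (by rw [← coeff_map, hP, coeff_zero])

theorem ZMod.isNilpotent_of_castHom_eq_zero {a n : ℕ} (hn : n ≠ 0) {x : ZMod (a ^ n)}
    (hx : ZMod.castHom (dvd_pow_self a hn) (ZMod a) x = 0) : IsNilpotent x := by
  obtain ⟨k, rfl⟩ := ZMod.intCast_surjective x
  rw [map_intCast, ZMod.intCast_zmod_eq_zero_iff_dvd] at hx
  obtain ⟨m, rfl⟩ := hx
  refine ⟨n, ?_⟩
  rw [← Int.cast_pow, mul_pow, Int.cast_mul, Int.cast_pow, Int.cast_natCast, ← Nat.cast_pow,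
    ZMod.natCast_self, zero_mul]

theorem PadicInt.ringHom_eq_toZMod {p : ℕ} [Fact p.Prime] (φ : ℤ_[p] →+* ZMod p) :
    φ = toZMod := by
  apply ZMod.ringHom_eq_of_ker_eq
  have hmax := RingHom.ker_isMaximal_of_surjective φ (ZMod.ringHom_surjective φ)
  rw [ker_toZMod, IsLocalRing.eq_maximalIdeal hmax]

theorem PadicInt.isCoprime_map_toZModPow {p : ℕ} [Fact p.Prime] {n : ℕ} (hn : n ≠ 0)
    {f g : ℤ_[p][X]} (h : IsCoprime (f.map toZMod) (g.map toZMod)) :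
    IsCoprime (f.map (toZModPow n)) (g.map (toZModPow n)) := by
  set π := ZMod.castHom (dvd_pow_self p hn) (ZMod p)
  have hπ : π.comp (toZModPow n) = toZMod := ringHom_eq_toZMod _
  refine IsCoprime.of_map_of_ker_isNilpotent (φ := mapRingHom π)
    (map_surjective π (ZMod.ringHom_surjective π))
    (fun _ => isNilpotent_of_map_eq_zero fun _ => ZMod.isNilpotent_of_castHom_eq_zero hn) ?_
  simpa only [coe_mapRingHom, map_map, hπ] using h

section Bezout

variable {R : Type*} [CommRing R] [Nontrivial R]

theorem Polynomial.Monic.degree_lt_of_mul_add_mul_eq_one {F G a b : R[X]} (hF : F.Monic)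
    (hG : G.Monic) (hdeg : 0 < F.natDegree) (ha : a.degree < G.degree) (h : a * F + b * G = 1) :
    b.degree < F.degree := by
  have hlt : (b * G).degree < G.degree + F.degree := by
    rw [eq_sub_of_add_eq' h]
    refine (degree_sub_le _ _).trans_lt (max_lt ?_ ?_)
    · calc (1 : R[X]).degree ≤ 0 := degree_one_le
        _ < F.degree := by rwa [degree_eq_natDegree hF.ne_zero, Nat.cast_pos]
        _ ≤ G.degree + F.degree := le_add_of_nonneg_left (zero_le_degree_iff.mpr hG.ne_zero)
    · rw [hF.degree_mul]
      exact WithBot.add_lt_add_right (by simp [hF.ne_zero]) ha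
  rw [hG.degree_mul, add_comm] at hlt
  exact (WithBot.add_lt_add_iff_left (by simp [hG.ne_zero])).mp hlt

theorem IsCoprime.exists_degree_lt_of_monic {F G : R[X]} (h : IsCoprime F G) (hF : F.Monic)
    (hG : G.Monic) (hdeg : 0 < F.natDegree) :
    ∃ a b : R[X], a.degree < G.degree ∧ b.degree < F.degree ∧ a * F + b * G = 1 := by
  obtain ⟨a, b, hab⟩ := h
  have hbez : a %ₘ G * F + (b + a /ₘ G * F) * G = 1 := by
    linear_combination hab + F * modByMonic_add_div a G
  exact ⟨a %ₘ G, _, degree_modByMonic_lt a hG,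
    hF.degree_lt_of_mul_add_mul_eq_one hG hdeg (degree_modByMonic_lt a hG) hbez, hbez⟩

end Bezout

theorem hensel_bezout_step_general (p : ℕ) [Fact p.Prime] (f g : Polynomial ℤ_[p])
    (hf : f.Monic) (hg : g.Monic) (hdf : 1 ≤ f.natDegree)
    (hcop : Ideal.span {f.map (PadicInt.toZMod (p := p)), g.map (PadicInt.toZMod (p := p))} =
      (⊤ : Ideal (Polynomial (ZMod p))))
    (i : ℕ) :
    ∃ r' s' : Polynomial (ZMod (p ^ 2 ^ (i + 1))),
      r'.degree < g.degree ∧ s'.degree < f.degree ∧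
      r' * f.map (PadicInt.toZModPow (p := p) (2 ^ (i + 1))) +
        s' * g.map (PadicInt.toZModPow (p := p) (2 ^ (i + 1))) = 1 := by
  have hn : 2 ^ (i + 1) ≠ 0 := by positivity
  have : Fact (1 < p ^ 2 ^ (i + 1)) := ⟨Nat.one_lt_pow hn (Fact.out : p.Prime).one_lt⟩
  have hcop' : IsCoprime (f.map PadicInt.toZMod) (g.map PadicInt.toZMod) :=
    Ideal.mem_span_pair.mp ((Ideal.eq_top_iff_one _).mp hcop)
  obtain ⟨r', s', hr', hs', hbez⟩ :=
    (PadicInt.isCoprime_map_toZModPow hn hcop').exists_degree_lt_of_monic (hf.map _) (hg.map _)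
      (by rwa [hf.natDegree_map])
  rw [hg.degree_map] at hr'
  rw [hf.degree_map] at hs'
  exact ⟨r', s', hr', hs', hbez⟩

theorem hensel_bezout_step (p : ℕ) [Fact p.Prime] (f g : Polynomial ℤ_[p])
    (hf : f.Monic) (hg : g.Monic) (hdf : 1 ≤ f.natDegree) (hdg : 1 ≤ g.natDegree)
    (hcop : Ideal.span {f.map (PadicInt.toZMod (p := p)), g.map (PadicInt.toZMod (p := p))} =
      (⊤ : Ideal (Polynomial (ZMod p))))
    (i : ℕ) (r s : Polynomial (ZMod (p ^ 2 ^ i)))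
    (hrs : r * f.map (PadicInt.toZModPow (p := p) (2 ^ i)) +
      s * g.map (PadicInt.toZModPow (p := p) (2 ^ i)) = 1) :
    ∃ r' s' : Polynomial (ZMod (p ^ 2 ^ (i + 1))),
      r'.degree < g.degree ∧ s'.degree < f.degree ∧
      r' * f.map (PadicInt.toZModPow (p := p) (2 ^ (i + 1))) +
        s' * g.map (PadicInt.toZModPow (p := p) (2 ^ (i + 1))) = 1 :=
  hensel_bezout_step_general p f g hf hg hdf hcop i
end
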